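/- arXiv:2203.00279 — 12 statements merged into one kernel-verified Lean document; each statement's English description precedes it below -/
import Mathlib

section
/- Let A, S, S̄ be finite sets with #S = #S̄, f : A → A a map, and λ : A → S a surjective map. Then f is a bijection if and only if both of the following hold: (i) f is injective on λ⁻¹(s) for every s ∈ S; and (ii) there exists a pair of maps (λ̄, h), with λ̄ : A → S̄ surjective and h : S → S̄ bijective, such that λ̄ ∘ f = h ∘ λ. -/
open Function

theorem Function.Injective.of_comp_eq_of_injOn_fibers {A B S T : Type*} {f : A → B}
    {lam : A → S} {lamb : B → T} {h : S → T} (hh : Injective h) (hcomm : lamb ∘ f = h ∘ lam)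
    (hinj : ∀ s, Set.InjOn f {a | lam a = s}) : Injective f := by
  intro a b hab
  have hfiber : lam a = lam b := hh <| calc
    h (lam a) = lamb (f a) := (congrFun hcomm a).symm
    _ = lamb (f b) := by rw [hab]
    _ = h (lam b) := congrFun hcomm b
  exact hinj (lam a) rfl hfiber.symm hab

/-- Transport `lam` along the bijection `f`: the square closes with `lamb := e ∘ lam ∘ f⁻¹`. -/
theorem exists_surjective_comp_eq_of_bijective {A B S T : Type*} {f : A → B} {lam : A → S}
    (hf : Bijective f) (hlam : Surjective lam) (e : S ≃ T) :
    ∃ lamb : B → T, Surjective lamb ∧ lamb ∘ f = e ∘ lam := by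
  let g := Equiv.ofBijective f hf
  refine ⟨e ∘ lam ∘ g.symm, (e.surjective.comp hlam).comp g.symm.surjective, ?_⟩
  funext a
  simp [g]

/-- Lemma 2.3: Let `A, S, S̄` be finite sets with `#S = #S̄`, `f : A → A` a map and
`λ : A → S` a surjective map. Then `f` is a bijection iff (i) `f` is injective on each
fiber `λ⁻¹(s)`, and (ii) there exists a pair `(λ̄, h)` with `λ̄ : A → S̄` surjective and
`h : S → S̄` bijective such that `λ̄ ∘ f = h ∘ λ`. -/
theorem stmt1 {A S Sb : Type*} [Fintype A] [Fintype S] [Fintype Sb]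
    (hcard : Fintype.card S = Fintype.card Sb)
    (f : A → A) (lam : A → S) (hlam : Function.Surjective lam) :
    Function.Bijective f ↔
      ((∀ s : S, Set.InjOn f {a : A | lam a = s}) ∧
        ∃ (lamb : A → Sb) (h : S → Sb),
          Function.Surjective lamb ∧ Function.Bijective h ∧ lamb ∘ f = h ∘ lam) := by
  constructor
  · intro hf
    let e := Fintype.equivOfCardEq hcard
    obtain ⟨lamb, hlamb, hcomm⟩ := exists_surjective_comp_eq_of_bijective hf hlam e
    exact ⟨fun _ => hf.injective.injOn, lamb, e, hlamb, e.bijective, hcomm⟩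
  · rintro ⟨hinj, lamb, h, -, hh, hcomm⟩
    exact Finite.injective_iff_bijective.mp (hh.injective.of_comp_eq_of_injOn_fibers hcomm hinj)
end

section
/- Let A, S, S̄ be finite sets with #S = #S̄, f : A → A a map, λ : A → S a surjective map, and h : S → S̄ a bijection. Then f is a bijection if and only if both of the following hold: (i) f is injective on λ⁻¹(s) for every s ∈ S; and (ii) there exists a uniquely determined surjective map λ̄ : A → S̄ such that λ̄ ∘ f = h ∘ λ. -/
/-!
If `f` misses a point `a₀`, then `λ̄` can be redefined at `a₀` without affecting `λ̄ ∘ f = h ∘ λ`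
or the surjectivity of `λ̄`, which contradicts uniqueness as soon as `S̄` has two points. If `S` is
a single point, condition (i) says that `f` is injective. Either way, finiteness of `A` makes `f`
bijective.
-/

open Function

theorem Function.injective_of_forall_injOn_fiber {α β σ : Type*} [Subsingleton σ]
    {f : α → β} {lam : α → σ} (hinj : ∀ s, Set.InjOn f {a | lam a = s}) : Injective f :=
  fun a _ hab => hinj (lam a) rfl (Subsingleton.elim _ _) hab

theorem Function.Bijective.existsUnique_surjective_comp_eq {α β γ : Type*} {f : α → β}
    (hf : Bijective f) {k : α → γ} (hk : Surjective k) :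
    ∃! g : β → γ, Surjective g ∧ g ∘ f = k := by
  let e := Equiv.ofBijective f hf
  have hfactor : (k ∘ e.symm) ∘ f = k := funext fun a => congrArg k (e.symm_apply_apply a)
  exact ⟨k ∘ e.symm, ⟨hk.comp e.symm.surjective, hfactor⟩,
    fun g ⟨_, hg⟩ => hf.surjective.injective_comp_right (hg.trans hfactor.symm)⟩

theorem Function.surjective_of_existsUnique_surjective_comp_eq {α β γ : Type*} [Nontrivial γ]
    {f : α → β} {k : α → γ} (hk : Surjective k)
    (huniq : ∃! g : β → γ, Surjective g ∧ g ∘ f = k) : Surjective f := by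
  classical
  obtain ⟨g, ⟨-, hg⟩, hunique⟩ := huniq
  by_contra hf
  obtain ⟨b₀, hb₀⟩ := not_forall.mp hf
  obtain ⟨t, ht⟩ := exists_ne (g b₀)
  have hupdate : update g b₀ t ∘ f = k := by
    rw [update_comp_eq_of_notMem_range g t hb₀, hg]
  have hg_eq := hunique _ ⟨(hupdate ▸ hk).of_comp, hupdate⟩
  exact ht (by simpa using congrFun hg_eq b₀)

theorem stmt2_general {A S Sb : Type*} [Fintype A]
    (f : A → A) (lam : A → S) (hlam : Function.Surjective lam)
    (h : S → Sb) (hh : Function.Bijective h) :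
    Function.Bijective f ↔
      ((∀ s : S, Set.InjOn f {a : A | lam a = s}) ∧
        ∃! lamb : A → Sb, Function.Surjective lamb ∧ lamb ∘ f = h ∘ lam) := by
  have hk : Surjective (h ∘ lam) := hh.surjective.comp hlam
  refine ⟨fun hf => ⟨fun _ => hf.injective.injOn, hf.existsUnique_surjective_comp_eq hk⟩, ?_⟩
  rintro ⟨hinj, huniq⟩
  rcases subsingleton_or_nontrivial S with hS | hS
  · exact Finite.injective_iff_bijective.mp (injective_of_forall_injOn_fiber hinj)
  · have : Nontrivial Sb := hh.injective.nontrivial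
    exact Finite.surjective_iff_bijective.mp (surjective_of_existsUnique_surjective_comp_eq hk huniq)

/-- Corollary 2.4: Let `A, S, S̄` be finite sets with `#S = #S̄`, `f : A → A` a map,
`λ : A → S` a surjective map and `h : S → S̄` a bijection. Then `f` is a bijection iff
(i) `f` is injective on each fiber `λ⁻¹(s)`, and (ii) there exists a uniquely determined
surjective map `λ̄ : A → S̄` such that `λ̄ ∘ f = h ∘ λ`. -/
theorem stmt2 {A S Sb : Type*} [Fintype A] [Fintype S] [Fintype Sb]
    (hcard : Fintype.card S = Fintype.card Sb)
    (f : A → A) (lam : A → S) (hlam : Function.Surjective lam)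
    (h : S → Sb) (hh : Function.Bijective h) :
    Function.Bijective f ↔
      ((∀ s : S, Set.InjOn f {a : A | lam a = s}) ∧
        ∃! lamb : A → Sb, Function.Surjective lamb ∧ lamb ∘ f = h ∘ lam) :=
  stmt2_general f lam hlam h hh
end

section
/- Let q be a prime power and let S, S̄ be subsets of F_q^* with #S = #S̄. Let f : F_q^* → F_q^*, g : S → S̄, λ : F_q^* → S, λ̄ : F_q^* → S̄ be maps such that λ and λ̄ are surjective and λ̄ ∘ f = g ∘ λ. Suppose f₁ : F_q^* → F_q^* is a bijection, h : S → F_q^* is a map, and f(x) = f₁(x)·h(λ(x)) for all x ∈ F_q^*, and suppose f is a bijection of F_q^*. Then, denoting by f₁⁻¹, f⁻¹ and g⁻¹ the compositional inverses of f₁, f and g respectively, for all x ∈ F_q^* one has f⁻¹(x) = f₁⁻¹( x / h(g⁻¹(λ̄(x))) ). -/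
/-!
Put `y = f⁻¹ x`. The commutation `λ̄ ∘ f = g ∘ λ` recovers `λ y` from `x` as `g⁻¹ (λ̄ x)`, so
`x = f₁ y · h (g⁻¹ (λ̄ x))` can be solved for `y`.
-/

open Function

section

variable {G α β : Type*} {f finv : G → G} {g : α → β} {ginv : β → α} {lam : G → α}
  {lamb : G → β}

theorem leftInverse_comp_eq_comp_rightInverse (hcomm : ∀ x, lamb (f x) = g (lam x))
    (hginv : LeftInverse ginv g) (hfinv : RightInverse finv f) (x : G) :
    ginv (lamb x) = lam (finv x) := by
  rw [← hginv (lam (finv x)), ← hcomm, hfinv x]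

theorem rightInverse_apply_eq_of_eq_mul [Group G] {f₁ f₁inv : G → G} {h : α → G}
    (hcomm : ∀ x, lamb (f x) = g (lam x)) (hfdef : ∀ x, f x = f₁ x * h (lam x))
    (hf₁inv : LeftInverse f₁inv f₁) (hginv : LeftInverse ginv g) (hfinv : RightInverse finv f)
    (x : G) : finv x = f₁inv (x / h (ginv (lamb x))) := by
  have hdiv : x / h (lam (finv x)) = f₁ (finv x) :=
    div_eq_of_eq_mul'' (by rw [← hfdef, hfinv x])
  rw [leftInverse_comp_eq_comp_rightInverse hcomm hginv hfinv, hdiv, hf₁inv]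

end

theorem stmt6_general {F : Type*} [Field F]
    (S Sb : Set Fˣ)
    (f f₁ : Fˣ → Fˣ) (g : S → Sb) (lam : Fˣ → S) (lamb : Fˣ → Sb)
    (hcomm : ∀ x : Fˣ, lamb (f x) = g (lam x))
    (h : S → Fˣ)
    (hfdef : ∀ x : Fˣ, f x = f₁ x * h (lam x))
    (f₁inv finv : Fˣ → Fˣ) (ginv : Sb → S)
    (hf₁inv₁ : Function.LeftInverse f₁inv f₁)
    (hfinv₂ : Function.RightInverse finv f)
    (hginv₁ : Function.LeftInverse ginv g) :
    ∀ x : Fˣ, finv x = f₁inv (x / h (ginv (lamb x))) :=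
  rightInverse_apply_eq_of_eq_mul hcomm hfdef hf₁inv₁ hginv₁ hfinv₂

/-- Theorem 3.1: Let `S, S̄ ⊆ F_q^*` with `#S = #S̄`, and `f : F_q^* → F_q^*`,
`g : S → S̄`, `λ : F_q^* → S`, `λ̄ : F_q^* → S̄` with `λ, λ̄` surjective and
`λ̄ ∘ f = g ∘ λ`. Let `f₁` be a bijection of `F_q^*` and `f(x) = f₁(x)·h(λ(x))` a
bijection of `F_q^*`. Then `f⁻¹(x) = f₁⁻¹(x / h(g⁻¹(λ̄(x))))`. -/
theorem stmt6 {F : Type*} [Field F] [Fintype F]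
    (S Sb : Set Fˣ) (hcard : S.ncard = Sb.ncard)
    (f f₁ : Fˣ → Fˣ) (g : S → Sb) (lam : Fˣ → S) (lamb : Fˣ → Sb)
    (hlam : Function.Surjective lam) (hlamb : Function.Surjective lamb)
    (hcomm : ∀ x : Fˣ, lamb (f x) = g (lam x))
    (h : S → Fˣ)
    (hf₁ : Function.Bijective f₁)
    (hfdef : ∀ x : Fˣ, f x = f₁ x * h (lam x))
    (hf : Function.Bijective f)
    (f₁inv finv : Fˣ → Fˣ) (ginv : Sb → S)
    (hf₁inv₁ : Function.LeftInverse f₁inv f₁) (hf₁inv₂ : Function.RightInverse f₁inv f₁)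
    (hfinv₁ : Function.LeftInverse finv f) (hfinv₂ : Function.RightInverse finv f)
    (hginv₁ : Function.LeftInverse ginv g) (hginv₂ : Function.RightInverse ginv g) :
    ∀ x : Fˣ, finv x = f₁inv (x / h (ginv (lamb x))) :=
  stmt6_general S Sb f f₁ g lam lamb hcomm h hfdef f₁inv finv ginv hf₁inv₁ hfinv₂ hginv₁
end

section
/- Let q be a power of a prime p, n a positive integer, and S a subset of F_{q^n} containing 0. Let h, k ∈ F_{q^n}[x] with h(0) ≠ 0 and k(0) = 0, and let λ(x) ∈ F_{q^n}[x] satisfy h(λ(F_{q^n})) ⊆ S and λ(aα) = k(a)λ(α) for all a ∈ S and all α ∈ F_{q^n}. Suppose f(x) = x·h(λ(x)) is a permutation of F_{q^n}, and let g⁻¹ be the compositional inverse of g(x) = x·k(h(x)) on λ(F_{q^n}). Then the compositional inverse of f is given by f⁻¹(x) = x / h(g⁻¹(λ(x))) for all x ∈ F_{q^n} for which h(g⁻¹(λ(x))) ≠ 0, and in particular f⁻¹(f(y)) = y for all y ∈ F_{q^n}. -/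
/-!
The map `λ` intertwines `f(x) = x h(λ(x))` with `g(s) = s k(h(s))`, i.e. `λ ∘ f = g ∘ λ` (the
commutative square of the AGW criterion). Hence `g⁻¹(λ(f(y))) = λ(y)`, and dividing
`f(y) = y h(λ(y))` by `h(λ(y))` recovers `y`.
-/

theorem semiconj_mul_comp_of_map_mul {M : Type*} [CommMonoid M] {S : Set M} {lam h k : M → M}
    (hhS : ∀ x, h (lam x) ∈ S) (hmul : ∀ a ∈ S, ∀ α, lam (a * α) = k a * lam α) :
    Function.Semiconj lam (fun x => x * h (lam x)) (fun s => s * k (h s)) := by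
  intro x
  change lam (x * h (lam x)) = lam x * k (h (lam x))
  rw [mul_comm x, hmul _ (hhS x) x, mul_comm]

theorem Function.Semiconj.leftInvOn_apply {α β : Type*} {lam : α → β} {f : α → α}
    {g ginv : β → β} (hsc : Function.Semiconj lam f g)
    (hginv : Set.LeftInvOn ginv g (Set.range lam)) (y : α) :
    ginv (lam (f y)) = lam y := by
  rw [hsc y]
  exact hginv ⟨y, rfl⟩

theorem stmt7_general {F : Type*} [Field F]
    (S : Set F)
    (h k lam : Polynomial F)
    (hhS : ∀ x : F, h.eval (lam.eval x) ∈ S)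
    (hmul : ∀ a ∈ S, ∀ α : F, lam.eval (a * α) = k.eval a * lam.eval α)
    (f : F → F) (hfdef : ∀ x : F, f x = x * h.eval (lam.eval x))
    (hf : Function.Bijective f)
    (ginv : F → F)
    (hginv : ∀ s ∈ Set.range (fun x : F => lam.eval x),
      ginv (s * k.eval (h.eval s)) = s)
    (finv : F → F)
    (hfinv₁ : Function.LeftInverse finv f) :
    (∀ x : F, h.eval (ginv (lam.eval x)) ≠ 0 →
        finv x = x / h.eval (ginv (lam.eval x))) ∧
    (∀ y : F, finv (f y) = y) := by
  obtain rfl : f = fun x => x * h.eval (lam.eval x) := funext hfdef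
  have hginv_lam : ∀ y, ginv (lam.eval (y * h.eval (lam.eval y))) = lam.eval y :=
    (semiconj_mul_comp_of_map_mul (lam := lam.eval) (h := h.eval) (k := k.eval) hhS
      hmul).leftInvOn_apply hginv
  refine ⟨fun x hx => ?_, hfinv₁⟩
  obtain ⟨y, rfl⟩ := hf.surjective x
  rw [hginv_lam] at hx ⊢
  rw [hfinv₁ y, mul_div_cancel_right₀ _ hx]

/-- Corollary 3.2: Let `q` be a power of a prime `p`, `n ≥ 1`, and `F` the field with
`q^n` elements. Let `S ⊆ F` with `0 ∈ S`, let `h, k` be polynomials with `h(0) ≠ 0`,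
`k(0) = 0`, `h(λ(F)) ⊆ S` and `λ(aα) = k(a)λ(α)` for all `a ∈ S`, `α ∈ F`. Suppose
`f(x) = x·h(λ(x))` permutes `F` and let `g⁻¹` be the compositional inverse of
`g(x) = x·k(h(x))` on `λ(F)`. Then `f⁻¹(x) = x / h(g⁻¹(λ(x)))` whenever
`h(g⁻¹(λ(x))) ≠ 0`, and in particular `f⁻¹(f(y)) = y` for all `y`. -/
theorem stmt7 {F : Type*} [Field F] [Fintype F]
    (p q n : ℕ) (hp : p.Prime) (hq : ∃ e : ℕ, q = p ^ e) (hn : 0 < n)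
    (hcard : Fintype.card F = q ^ n)
    (S : Set F) (h0S : (0 : F) ∈ S)
    (h k lam : Polynomial F)
    (hh0 : h.eval 0 ≠ 0) (hk0 : k.eval 0 = 0)
    (hhS : ∀ x : F, h.eval (lam.eval x) ∈ S)
    (hmul : ∀ a ∈ S, ∀ α : F, lam.eval (a * α) = k.eval a * lam.eval α)
    (f : F → F) (hfdef : ∀ x : F, f x = x * h.eval (lam.eval x))
    (hf : Function.Bijective f)
    (ginv : F → F)
    (hginv : ∀ s ∈ Set.range (fun x : F => lam.eval x),
      ginv (s * k.eval (h.eval s)) = s)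
    (finv : F → F)
    (hfinv₁ : Function.LeftInverse finv f) (hfinv₂ : Function.RightInverse finv f) :
    (∀ x : F, h.eval (ginv (lam.eval x)) ≠ 0 →
        finv x = x / h.eval (ginv (lam.eval x))) ∧
    (∀ y : F, finv (f y) = y) :=
  stmt7_general S h k lam hhS hmul f hfdef hf ginv hginv finv hfinv₁
end

section
/- Let q be a prime power, ℓ a positive divisor of q−1, s = (q−1)/ℓ, and h ∈ F_q[x]. Suppose f(x) = x^r h(x^s) is a permutation of F_q, so that gcd(r, s) = 1 and g(x) = x^r h(x)^s permutes the group μ_ℓ of ℓ-th roots of unity in F_q^*; let g⁻¹ be the compositional inverse of g on μ_ℓ. Assume further gcd(r, q−1) = 1, and let a, b be positive integers with br = 1 + a(q−1). Then the compositional inverse of f satisfies f⁻¹(x) = x^b · h(g⁻¹(x^s))^{−b} for all x ∈ F_q^* (and f⁻¹(0) = 0). -/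
/-!
Write `x = f y` with `y ≠ 0`. Since `(y ^ s) ^ ℓ = y ^ (q - 1) = 1` and
`x ^ s = (y ^ s) ^ r * h(y ^ s) ^ s = g(y ^ s)`, we get `g⁻¹(x ^ s) = y ^ s`, hence
`x ^ b * h(g⁻¹(x ^ s)) ^ (-b) = y ^ (b r) = y ^ (1 + a (q - 1)) = y`.
-/

open Polynomial

theorem pow_pow_eq_self_of_pow_eq_one {M : Type*} [Monoid M] {y : M} {n a b r : ℕ}
    (hy : y ^ n = 1) (hbr : b * r = 1 + a * n) : (y ^ r) ^ b = y := by
  rw [← pow_mul, mul_comm r b, hbr, pow_add, pow_mul', hy, one_pow, pow_one, mul_one]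

theorem pow_mul_inv_eval_ginv_eq {K : Type*} [Field K] {r s ℓ n a b : ℕ} {h : K[X]}
    {ginv : K → K} (hginv : ∀ z : K, z ^ ℓ = 1 → ginv (z ^ r * h.eval z ^ s) = z)
    (hsℓ : s * ℓ = n) (hbr : b * r = 1 + a * n) {y : K} (hy : y ^ n = 1)
    (hne : h.eval (y ^ s) ≠ 0) :
    (y ^ r * h.eval (y ^ s)) ^ b * (h.eval (ginv ((y ^ r * h.eval (y ^ s)) ^ s)))⁻¹ ^ b = y := by
  have hg : ginv ((y ^ r * h.eval (y ^ s)) ^ s) = y ^ s := by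
    rw [mul_pow, ← pow_mul, mul_comm r s, pow_mul]
    exact hginv _ (by rw [← pow_mul, hsℓ, hy])
  rw [hg, ← mul_pow, mul_assoc, mul_inv_cancel₀ hne, mul_one,
    pow_pow_eq_self_of_pow_eq_one hy hbr]

theorem stmt8_general {F : Type*} [Field F] [Fintype F]
    (r ℓ s a b : ℕ) (hℓdvd : ℓ ∣ Fintype.card F - 1)
    (hs : s = (Fintype.card F - 1) / ℓ)
    (h : Polynomial F)
    (f : F → F) (hfdef : ∀ x : F, f x = x ^ r * h.eval (x ^ s))
    (ginv : F → F)
    (hginv : ∀ x : F, x ^ ℓ = 1 → ginv (x ^ r * (h.eval x) ^ s) = x)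
    (hbr : b * r = 1 + a * (Fintype.card F - 1))
    (finv : F → F)
    (hfinv₁ : Function.LeftInverse finv f) (hfinv₂ : Function.RightInverse finv f) :
    finv 0 = 0 ∧
    ∀ x : F, x ≠ 0 → finv x = x ^ b * ((h.eval (ginv (x ^ s)))⁻¹) ^ b := by
  have hr : r ≠ 0 := by rintro rfl; omega
  have hf0 : f 0 = 0 := by rw [hfdef, zero_pow hr, zero_mul]
  refine ⟨(congrArg finv hf0).symm.trans (hfinv₁ 0), fun x hx => ?_⟩
  obtain ⟨y, rfl⟩ := hfinv₂.surjective x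
  have hy : y ≠ 0 := by rintro rfl; exact hx hf0
  rw [hfdef, mul_ne_zero_iff] at hx
  rw [hfinv₁ y, hfdef]
  exact (pow_mul_inv_eval_ginv_eq hginv (hs ▸ Nat.div_mul_cancel hℓdvd) hbr
    (FiniteField.pow_card_sub_one_eq_one y hy) hx.2).symm

/-- Corollary 3.4: Let `F = F_q`, `ℓ ∣ q−1`, `s = (q−1)/ℓ`, `h ∈ F_q[x]`. Suppose
`f(x) = x^r h(x^s)` permutes `F_q`, so that `gcd(r,s) = 1` and `g(x) = x^r h(x)^s`
permutes `μ_ℓ`, with `g⁻¹` the compositional inverse of `g` on `μ_ℓ`. Assume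
`gcd(r, q−1) = 1` and `b·r = 1 + a·(q−1)` with `a, b` positive. Then
`f⁻¹(x) = x^b · h(g⁻¹(x^s))^{−b}` for all `x ≠ 0`, and `f⁻¹(0) = 0`. -/
theorem stmt8 {F : Type*} [Field F] [Fintype F]
    (r ℓ s a b : ℕ) (hℓpos : 0 < ℓ) (hℓdvd : ℓ ∣ Fintype.card F - 1)
    (hs : s = (Fintype.card F - 1) / ℓ)
    (h : Polynomial F)
    (f : F → F) (hfdef : ∀ x : F, f x = x ^ r * h.eval (x ^ s))
    (hf : Function.Bijective f)
    (hgcdrs : Nat.gcd r s = 1)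
    (hgbij : Set.BijOn (fun x : F => x ^ r * (h.eval x) ^ s)
      {x : F | x ^ ℓ = 1} {x : F | x ^ ℓ = 1})
    (ginv : F → F)
    (hginv : ∀ x : F, x ^ ℓ = 1 → ginv (x ^ r * (h.eval x) ^ s) = x)
    (hgcd : Nat.gcd r (Fintype.card F - 1) = 1)
    (ha : 0 < a) (hb : 0 < b) (hbr : b * r = 1 + a * (Fintype.card F - 1))
    (finv : F → F)
    (hfinv₁ : Function.LeftInverse finv f) (hfinv₂ : Function.RightInverse finv f) :
    finv 0 = 0 ∧
    ∀ x : F, x ≠ 0 → finv x = x ^ b * ((h.eval (ginv (x ^ s)))⁻¹) ^ b :=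
  stmt8_general r ℓ s a b hℓdvd hs h f hfdef ginv hginv hbr finv hfinv₁ hfinv₂
end

section
/- Let q be a prime power and let S, S̄ be subsets of F_q with #S = #S̄. Let f : F_q → F_q, g : S → S̄, λ : F_q → S, λ̄ : F_q → S̄ be maps such that λ and λ̄ are surjective and λ̄ ∘ f = g ∘ λ. Suppose f₁ : F_q → F_q is a bijection, h : S → F_q is a map, f(x) = f₁(x) + h(λ(x)) for all x ∈ F_q, and f is a bijection of F_q. Then, denoting by f₁⁻¹, f⁻¹ and g⁻¹ the compositional inverses of f₁, f and g respectively, for all x ∈ F_q one has f⁻¹(x) = f₁⁻¹( x − h(g⁻¹(λ̄(x))) ). -/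
open Function

/-- Since `λ̄ ∘ f = g ∘ λ`, the value `f x` determines `λ x = g⁻¹ (λ̄ (f x))`, hence the
perturbation `h (λ x)`, which can then be subtracted off to leave `f₁ x`. -/
theorem leftInverse_sub_comp_of_add_comp {G α β : Type*} [AddGroup G]
    {f f₁ f₁inv : G → G} {g : α → β} {ginv : β → α} {lam : G → α} {lamb : G → β} {h : α → G}
    (hcomm : ∀ x, lamb (f x) = g (lam x)) (hfdef : ∀ x, f x = f₁ x + h (lam x))
    (hginv : LeftInverse ginv g) (hf₁inv : LeftInverse f₁inv f₁) :
    LeftInverse (fun y ↦ f₁inv (y - h (ginv (lamb y)))) f := by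
  intro x
  simp only
  rw [hcomm, hginv, hfdef, add_sub_cancel_right, hf₁inv]

theorem stmt9_general {F : Type*} [Field F]
    (S Sb : Set F)
    (f f₁ : F → F) (g : S → Sb) (lam : F → S) (lamb : F → Sb)
    (hcomm : ∀ x : F, lamb (f x) = g (lam x))
    (h : S → F)
    (hfdef : ∀ x : F, f x = f₁ x + h (lam x))
    (f₁inv finv : F → F) (ginv : Sb → S)
    (hf₁inv₁ : Function.LeftInverse f₁inv f₁)
    (hfinv₂ : Function.RightInverse finv f)
    (hginv₁ : Function.LeftInverse ginv g) :
    ∀ x : F, finv x = f₁inv (x - h (ginv (lamb x))) := by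
  intro x
  have hfinv := leftInverse_sub_comp_of_add_comp hcomm hfdef hginv₁ hf₁inv₁ (finv x)
  rwa [hfinv₂ x, eq_comm] at hfinv

/-- Theorem 3.5: Let `S, S̄ ⊆ F_q` with `#S = #S̄`, and `f : F_q → F_q`, `g : S → S̄`,
`λ : F_q → S`, `λ̄ : F_q → S̄` with `λ, λ̄` surjective and `λ̄ ∘ f = g ∘ λ`. Let `f₁`
be a bijection of `F_q` and `f(x) = f₁(x) + h(λ(x))` a bijection of `F_q`. Then
`f⁻¹(x) = f₁⁻¹(x − h(g⁻¹(λ̄(x))))`. -/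
theorem stmt9 {F : Type*} [Field F] [Fintype F]
    (S Sb : Set F) (hcard : S.ncard = Sb.ncard)
    (f f₁ : F → F) (g : S → Sb) (lam : F → S) (lamb : F → Sb)
    (hlam : Function.Surjective lam) (hlamb : Function.Surjective lamb)
    (hcomm : ∀ x : F, lamb (f x) = g (lam x))
    (h : S → F)
    (hf₁ : Function.Bijective f₁)
    (hfdef : ∀ x : F, f x = f₁ x + h (lam x))
    (hf : Function.Bijective f)
    (f₁inv finv : F → F) (ginv : Sb → S)
    (hf₁inv₁ : Function.LeftInverse f₁inv f₁) (hf₁inv₂ : Function.RightInverse f₁inv f₁)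
    (hfinv₁ : Function.LeftInverse finv f) (hfinv₂ : Function.RightInverse finv f)
    (hginv₁ : Function.LeftInverse ginv g) (hginv₂ : Function.RightInverse ginv g) :
    ∀ x : F, finv x = f₁inv (x - h (ginv (lamb x))) :=
  stmt9_general S Sb f f₁ g lam lamb hcomm h hfdef f₁inv finv ginv hf₁inv₁ hfinv₂ hginv₁
end

section
/- Let F be a finite field and S, S̄ finite subsets of F with #S = #S̄. Let λ : F → S and λ̄ : F → S̄ be surjective maps with λ̄ additive, i.e., λ̄(x + y) = λ̄(x) + λ̄(y) for all x, y ∈ F. Let g₀ : S → F and g : F → F be maps such that λ̄ ∘ (g + g₀ ∘ λ) = g ∘ λ, g(S) = S̄, and λ̄(g₀(λ(x))) = 0 for every x ∈ F. Suppose f(x) = g(x) + g₀(λ(x)) is a permutation of F and g is a bijection of F with compositional inverse g⁻¹. Then the compositional inverse of f is given by f⁻¹(x) = g⁻¹( x − g₀(g⁻¹(λ̄(x))) ) for all x ∈ F. -/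
open Function

/- Applying `lamb` to `f y` recovers `g (lam y)`, so `ginv (lamb (f y)) = lam y`; then
`g y = f y - g₀ (lam y)` and `ginv` undoes `g`. -/
theorem leftInverse_of_eq_add_comp {α G : Type*} [AddGroup G] {f g g₀ : α → G} {lam : α → α}
    {lamb : G → G} {ginv : G → α} (hf : ∀ y, f y = g y + g₀ (lam y))
    (hcomm : ∀ y, lamb (f y) = g (lam y)) (hginv : LeftInverse ginv g) :
    LeftInverse (fun x => ginv (x - g₀ (ginv (lamb x)))) f := by
  intro y
  have hlam : ginv (lamb (f y)) = lam y := by rw [hcomm, hginv]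
  have hg : f y - g₀ (lam y) = g y := sub_eq_of_eq_add (hf y)
  simp only [hlam, hg, hginv y]

theorem stmt10_general {F : Type*} [Field F]
    (lam lamb : F → F)
    (g₀ g : F → F)
    (hcomm : ∀ x : F, lamb (g x + g₀ (lam x)) = g (lam x))
    (f : F → F) (hfdef : ∀ x : F, f x = g x + g₀ (lam x))
    (ginv : F → F)
    (hginv₁ : Function.LeftInverse ginv g)
    (finv : F → F)
    (hfinv₂ : Function.RightInverse finv f) :
    ∀ x : F, finv x = ginv (x - g₀ (ginv (lamb x))) := by
  have hleft := leftInverse_of_eq_add_comp hfdef (fun y => (hfdef y).symm ▸ hcomm y) hginv₁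
  intro x
  simpa only [hfinv₂ x] using (hleft (finv x)).symm

/-- Corollary 3.7: Let `F` be a finite field and `S, S̄ ⊆ F` with `#S = #S̄`, with
surjections `λ : F → S`, `λ̄ : F → S̄`, where `λ̄` is additive. Let `g₀ : S → F` and
`g : F → F` satisfy `λ̄ ∘ (g + g₀ ∘ λ) = g ∘ λ`, `g(S) = S̄`, and `λ̄(g₀(λ(x))) = 0`
for all `x`. If `f(x) = g(x) + g₀(λ(x))` is a permutation of `F` and `g` is a bijection
with inverse `g⁻¹`, then `f⁻¹(x) = g⁻¹(x − g₀(g⁻¹(λ̄(x))))`. -/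
theorem stmt10 {F : Type*} [Field F] [Fintype F]
    (S Sb : Set F) (hcard : S.ncard = Sb.ncard)
    (lam lamb : F → F)
    (hlamS : Set.range lam = S) (hlambSb : Set.range lamb = Sb)
    (hadd : ∀ x y : F, lamb (x + y) = lamb x + lamb y)
    (g₀ g : F → F)
    (hcomm : ∀ x : F, lamb (g x + g₀ (lam x)) = g (lam x))
    (hgS : g '' S = Sb)
    (hg₀ : ∀ x : F, lamb (g₀ (lam x)) = 0)
    (f : F → F) (hfdef : ∀ x : F, f x = g x + g₀ (lam x))
    (hf : Function.Bijective f)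
    (hg : Function.Bijective g)
    (ginv : F → F)
    (hginv₁ : Function.LeftInverse ginv g) (hginv₂ : Function.RightInverse ginv g)
    (finv : F → F)
    (hfinv₁ : Function.LeftInverse finv f) (hfinv₂ : Function.RightInverse finv f) :
    ∀ x : F, finv x = ginv (x - g₀ (ginv (lamb x))) :=
  stmt10_general lam lamb g₀ g hcomm f hfdef ginv hginv₁ finv hfinv₂
end

section
/- Let q be a prime power, S ⊆ F_q, and λ : F_q → S a surjective map. Let γ ∈ F_q^* be a b-linear translator with respect to S for λ, i.e., λ(x + uγ) = λ(x) + ub for all x ∈ F_q and all u ∈ S (with b ∈ F_q). Let G : S → S be a map (e.g., induced by a polynomial in F_q[x] mapping S into S). Suppose f(x) = x + γ·G(λ(x)) is a permutation of F_q, so that g(x) = x + b·G(x) permutes S; let g⁻¹ be the compositional inverse of g on S. Then the compositional inverse of f is given by f⁻¹(x) = x − γ·G(g⁻¹(λ(x))) for all x ∈ F_q. -/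
/-!
If `t` is the preimage of `λ(x)` under `g`, then by the linear translator property
`λ(x − γ·G(t)) = λ(x) − b·G(t) = t`, so `f(x − γ·G(t)) = x − γ·G(t) + γ·G(t) = x`.
-/

section LinearTranslator

variable {R : Type*} [CommRing R]

def IsLinearTranslator (lam : R → R) (S : Set R) (γ b : R) : Prop :=
  ∀ x : R, ∀ u ∈ S, lam (x + u * γ) = lam x + u * b

variable {lam : R → R} {S : Set R} {γ b : R}

theorem IsLinearTranslator.map_sub_mul (h : IsLinearTranslator lam S γ b) (x : R) {u : R}
    (hu : u ∈ S) : lam (x - u * γ) = lam x - u * b := by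
  rw [eq_sub_iff_add_eq, ← h _ u hu, sub_add_cancel]

theorem IsLinearTranslator.apply_sub_mul_eq_self (h : IsLinearTranslator lam S γ b)
    {G f : R → R} (hfdef : ∀ x, f x = x + γ * G (lam x)) {x t : R} (hGt : G t ∈ S)
    (ht : lam x = t + b * G t) : f (x - γ * G t) = x := by
  have hlam : lam (x - γ * G t) = t := by
    rw [mul_comm γ, h.map_sub_mul x hGt, ht]
    ring
  rw [hfdef, hlam, sub_add_cancel]

end LinearTranslator

theorem stmt11_general {F : Type*} [Field F]
    (S : Set F) (lam : F → F) (hlamS : Set.range lam = S)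
    (γ b : F)
    (htrans : ∀ x : F, ∀ u ∈ S, lam (x + u * γ) = lam x + u * b)
    (G : F → F) (hG : Set.MapsTo G S S)
    (f : F → F) (hfdef : ∀ x : F, f x = x + γ * G (lam x))
    (hgperm : Set.BijOn (fun x : F => x + b * G x) S S)
    (ginv : F → F)
    (hginv : ∀ s ∈ S, ginv (s + b * G s) = s)
    (finv : F → F)
    (hfinv₁ : Function.LeftInverse finv f) :
    ∀ x : F, finv x = x - γ * G (ginv (lam x)) := by
  intro x
  obtain ⟨t, htS, ht⟩ := hgperm.surjOn (hlamS ▸ Set.mem_range_self x : lam x ∈ S)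
  dsimp only at ht
  have hfx : f (x - γ * G t) = x :=
    IsLinearTranslator.apply_sub_mul_eq_self htrans hfdef (hG htS) ht.symm
  calc finv x = finv (f (x - γ * G t)) := by rw [hfx]
    _ = x - γ * G t := hfinv₁ _
    _ = x - γ * G (ginv (lam x)) := by rw [← ht, hginv t htS]

/-- Corollary 3.9: Let `S ⊆ F_q`, `λ : F_q → S` surjective, and `γ ∈ F_q^*` a
`b`-linear translator of `λ` with respect to `S`, i.e. `λ(x + uγ) = λ(x) + ub` for
all `x ∈ F_q`, `u ∈ S`. Let `G` map `S` into `S`. Suppose `f(x) = x + γ·G(λ(x))` is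
a permutation of `F_q`, so that `g(x) = x + b·G(x)` permutes `S`, with `g⁻¹` its
compositional inverse on `S`. Then `f⁻¹(x) = x − γ·G(g⁻¹(λ(x)))`. -/
theorem stmt11 {F : Type*} [Field F] [Fintype F]
    (S : Set F) (lam : F → F) (hlamS : Set.range lam = S)
    (γ b : F) (hγ : γ ≠ 0)
    (htrans : ∀ x : F, ∀ u ∈ S, lam (x + u * γ) = lam x + u * b)
    (G : F → F) (hG : Set.MapsTo G S S)
    (f : F → F) (hfdef : ∀ x : F, f x = x + γ * G (lam x))
    (hf : Function.Bijective f)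
    (hgperm : Set.BijOn (fun x : F => x + b * G x) S S)
    (ginv : F → F)
    (hginv : ∀ s ∈ S, ginv (s + b * G s) = s)
    (finv : F → F)
    (hfinv₁ : Function.LeftInverse finv f) (hfinv₂ : Function.RightInverse finv f) :
    ∀ x : F, finv x = x - γ * G (ginv (lam x)) :=
  stmt11_general S lam hlamS γ b htrans G hG f hfdef hgperm ginv hginv finv hfinv₁
end

section
/- Let q be a prime power, ℓ a positive divisor of q−1, s = (q−1)/ℓ, and h ∈ F_q[x]. Suppose f(x) = x^r h(x^s) is a permutation of F_q, so that gcd(r, s) = 1 and g(x) = x^r h(x)^s permutes the group μ_ℓ of ℓ-th roots of unity in F_q^*; let g⁻¹ be the compositional inverse of g on μ_ℓ. Let a and b be integers with a·s + b·r = 1. Then the compositional inverse of f satisfies f⁻¹(x) = g⁻¹(x^s)^a · x^b · h(g⁻¹(x^s))^{−b} for all x ∈ F_q^* (and f⁻¹(0) = 0). -/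
/-!
Write `y = f⁻¹(x)` and `H = h(y^s)`, so that `x = y^r H`. Since `s ℓ = q - 1`, `y^s` lies in `μ_ℓ`,
and `x^s = (y^s)^r H^s = g(y^s)`, hence `g⁻¹(x^s) = y^s`. The Bézout relation `a s + b r = 1` then
recovers `y = (y^s)^a (y^r H)^b H^(-b)`. That `f(0) = 0` is clear for `r > 0`; for `r = 0` coprimality
forces `s = 1`, so `μ_ℓ = F^*` and a nonzero `h(0)` would have a second preimage under `f = g = h`.
-/

open Polynomial

theorem pow_zpow_mul_zpow_mul_zpow_neg_eq_self {G₀ : Type*} [CommGroupWithZero G₀] {y H : G₀}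
    (hy : y ≠ 0) (hH : H ≠ 0) {r s : ℕ} {a b : ℤ} (hab : a * s + b * r = 1) :
    (y ^ s) ^ a * (y ^ r * H) ^ b * H ^ (-b) = y := by
  calc (y ^ s) ^ a * (y ^ r * H) ^ b * H ^ (-b)
      = y ^ (a * s + b * r) * (H ^ b * H ^ (-b)) := by
        rw [zpow_add₀ hy, mul_zpow, ← zpow_natCast, ← zpow_natCast, ← zpow_mul, ← zpow_mul,
          mul_comm (s : ℤ), mul_comm (r : ℤ)]
        simp only [mul_assoc]
    _ = y := by rw [hab, ← zpow_add₀ hH, add_neg_cancel, zpow_zero, zpow_one, mul_one]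

namespace FiniteField

variable {F : Type*} [Field F] [Fintype F] {r s ℓ : ℕ} (h : F[X])

theorem pow_pow_eq_one_of_mul_eq {y : F} (hy : y ≠ 0) (hsℓ : s * ℓ = Fintype.card F - 1) :
    (y ^ s) ^ ℓ = 1 := by
  rw [← pow_mul, hsℓ, pow_card_sub_one_eq_one y hy]

theorem zero_pow_mul_eval_zero_pow_eq_zero
    (hf : Function.Injective fun x : F => x ^ r * h.eval (x ^ s))
    (hsℓ : s * ℓ = Fintype.card F - 1) (hrs : r.gcd s = 1)
    (hg : Set.SurjOn (fun x : F => x ^ r * h.eval x ^ s) {x | x ^ ℓ = 1} {x | x ^ ℓ = 1}) :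
    (0 : F) ^ r * h.eval (0 ^ s) = 0 := by
  obtain rfl | hr := r.eq_zero_or_pos
  swap
  · rw [zero_pow hr.ne', zero_mul]
  obtain rfl : s = 1 := by simpa using hrs
  obtain rfl : ℓ = Fintype.card F - 1 := by omega
  by_contra hne
  obtain ⟨c, hc, hgc⟩ := hg (pow_card_sub_one_eq_one _ hne)
  have hc0 : c ≠ 0 := by
    rintro rfl
    simp [zero_pow (Nat.sub_ne_zero_of_lt Fintype.one_lt_card)] at hc
  exact hc0 (hf (by simpa using hgc))

theorem ginv_pow_zpow_mul_zpow_mul_eval_zpow_eq {ginv : F → F}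
    (hginv : ∀ x : F, x ^ ℓ = 1 → ginv (x ^ r * h.eval x ^ s) = x)
    (hsℓ : s * ℓ = Fintype.card F - 1) {a b : ℤ} (hab : a * s + b * r = 1)
    {x y : F} (hy : y ≠ 0) (hx : x ≠ 0) (hxy : x = y ^ r * h.eval (y ^ s)) :
    ginv (x ^ s) ^ a * x ^ b * h.eval (ginv (x ^ s)) ^ (-b) = y := by
  have hgx : ginv (x ^ s) = y ^ s := by
    rw [← hginv _ (pow_pow_eq_one_of_mul_eq hy hsℓ), hxy, mul_pow, ← pow_mul, ← pow_mul,
      mul_comm r s]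
  have hH : h.eval (y ^ s) ≠ 0 := right_ne_zero_of_mul (hxy ▸ hx)
  rw [hgx, hxy]
  exact pow_zpow_mul_zpow_mul_zpow_neg_eq_self hy hH hab

end FiniteField

theorem stmt15_general {F : Type*} [Field F] [Fintype F]
    (r ℓ s : ℕ) (hℓdvd : ℓ ∣ Fintype.card F - 1)
    (hs : s = (Fintype.card F - 1) / ℓ)
    (h : Polynomial F)
    (f : F → F) (hfdef : ∀ x : F, f x = x ^ r * h.eval (x ^ s))
    (hgcdrs : Nat.gcd r s = 1)
    (hgbij : Set.BijOn (fun x : F => x ^ r * (h.eval x) ^ s)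
      {x : F | x ^ ℓ = 1} {x : F | x ^ ℓ = 1})
    (ginv : F → F)
    (hginv : ∀ x : F, x ^ ℓ = 1 → ginv (x ^ r * (h.eval x) ^ s) = x)
    (a b : ℤ) (hab : a * (s : ℤ) + b * (r : ℤ) = 1)
    (finv : F → F)
    (hfinv₁ : Function.LeftInverse finv f) (hfinv₂ : Function.RightInverse finv f) :
    finv 0 = 0 ∧
    ∀ x : F, x ≠ 0 →
      finv x = (ginv (x ^ s)) ^ a * x ^ b * (h.eval (ginv (x ^ s))) ^ (-b) := by
  have hsℓ : s * ℓ = Fintype.card F - 1 := hs ▸ Nat.div_mul_cancel hℓdvd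
  have hf0 : f 0 = 0 := by
    rw [hfdef]
    exact FiniteField.zero_pow_mul_eval_zero_pow_eq_zero h (funext hfdef ▸ hfinv₁.injective) hsℓ
      hgcdrs hgbij.surjOn
  refine ⟨by simpa [hf0] using hfinv₁ 0, fun x hx => ?_⟩
  obtain ⟨y, rfl⟩ := hfinv₂.surjective x
  have hy : y ≠ 0 := by rintro rfl; exact hx hf0
  rw [hfinv₁ y]
  exact (FiniteField.ginv_pow_zpow_mul_zpow_mul_eval_zpow_eq h hginv hsℓ hab hy hx (hfdef y)).symm

/-- Proposition 4.3: Let `F = F_q`, `ℓ ∣ q−1`, `s = (q−1)/ℓ`, `h ∈ F_q[x]`. Suppose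
`f(x) = x^r h(x^s)` permutes `F_q`, so that `gcd(r,s) = 1` and `g(x) = x^r h(x)^s`
permutes `μ_ℓ`, with `g⁻¹` the compositional inverse of `g` on `μ_ℓ`. Let `a, b` be
integers with `a·s + b·r = 1`. Then `f⁻¹(x) = g⁻¹(x^s)^a · x^b · h(g⁻¹(x^s))^{−b}`
for all `x ≠ 0`, and `f⁻¹(0) = 0`. -/
theorem stmt15 {F : Type*} [Field F] [Fintype F]
    (r ℓ s : ℕ) (hℓpos : 0 < ℓ) (hℓdvd : ℓ ∣ Fintype.card F - 1)
    (hs : s = (Fintype.card F - 1) / ℓ)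
    (h : Polynomial F)
    (f : F → F) (hfdef : ∀ x : F, f x = x ^ r * h.eval (x ^ s))
    (hf : Function.Bijective f)
    (hgcdrs : Nat.gcd r s = 1)
    (hgbij : Set.BijOn (fun x : F => x ^ r * (h.eval x) ^ s)
      {x : F | x ^ ℓ = 1} {x : F | x ^ ℓ = 1})
    (ginv : F → F)
    (hginv : ∀ x : F, x ^ ℓ = 1 → ginv (x ^ r * (h.eval x) ^ s) = x)
    (a b : ℤ) (hab : a * (s : ℤ) + b * (r : ℤ) = 1)
    (finv : F → F)
    (hfinv₁ : Function.LeftInverse finv f) (hfinv₂ : Function.RightInverse finv f) :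
    finv 0 = 0 ∧
    ∀ x : F, x ≠ 0 →
      finv x = (ginv (x ^ s)) ^ a * x ^ b * (h.eval (ginv (x ^ s))) ^ (-b) :=
  stmt15_general r ℓ s hℓdvd hs h f hfdef hgcdrs hgbij ginv hginv a b hab finv hfinv₁ hfinv₂
end

section
/- Let q be an odd prime power, γ a primitive element of F_q, and a₁, a₂ ∈ F_q^*. Let r₁, r₂ be positive integers and define f : F_q → F_q by f(x) = (a₁/2)·x^{r₁}·(1 − x^{(q−1)/2}) + (a₂/2)·x^{r₂}·(1 + x^{(q−1)/2}); equivalently, f(0) = 0, f(x) = a₁x^{r₁} for x a non-square (x ∈ γ⟨γ²⟩), and f(x) = a₂x^{r₂} for x a nonzero square (x ∈ ⟨γ²⟩). Then f is a permutation of F_q if and only if gcd(r₁r₂, (q−1)/2) = 1 and the pair ((−1)^{r₁}·a₁^{(q−1)/2}, a₂^{(q−1)/2}) satisfies {(−1)^{r₁}·a₁^{(q−1)/2}, a₂^{(q−1)/2}} = {−1, 1} as an unordered pair of elements of F_q. -/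
/-!
Write `χ x = x ^ (q / 2)` for the quadratic character (for odd `q`, `q / 2 = (q - 1) / 2`).
On the non-squares `f` is `x ↦ a₁ x ^ r₁` and on the nonzero squares it is `x ↦ a₂ x ^ r₂`, so by
multiplicativity of `χ` it maps the non-squares into the class `χ = (-1) ^ r₁ a₁ ^ (q / 2)` and the
nonzero squares into the class `χ = a₂ ^ (q / 2)`. Hence `f` is a permutation iff these two classes
differ and `f` is injective on each class. Two elements of one class differ by a factor `ζ` with
`ζ ^ (q / 2) = 1`, so `x ↦ a x ^ r` is injective on a class iff no `ζ ≠ 1` has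
`ζ ^ r = ζ ^ (q / 2) = 1`, which by Cauchy's theorem means `gcd (r, q / 2) = 1`.
-/

open Function FiniteField

theorem exists_ne_one_pow_eq_one_of_not_coprime {G : Type*} [Group G] [Fintype G] {r n : ℕ}
    (hn : n ∣ Fintype.card G) (h : ¬ r.Coprime n) : ∃ ζ : G, ζ ≠ 1 ∧ ζ ^ r = 1 ∧ ζ ^ n = 1 := by
  obtain ⟨p, hp, hpd⟩ := Nat.exists_prime_and_dvd h
  have := Fact.mk hp
  obtain ⟨ζ, hζ⟩ :=
    exists_prime_orderOf_dvd_card p ((hpd.trans (Nat.gcd_dvd_right r n)).trans hn)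
  refine ⟨ζ, fun h1 => hp.one_lt.ne' (by rw [← hζ, h1, orderOf_one]), pow_gcd_eq_one.mp ?_⟩
  exact orderOf_dvd_iff_pow_eq_one.mp (hζ ▸ hpd)

theorem eq_of_pow_eq_pow_of_coprime {G₀ : Type*} [CommGroupWithZero G₀] {r n : ℕ} {x y : G₀}
    (hy : y ≠ 0) (hrn : r.Coprime n) (hr : x ^ r = y ^ r) (hn : x ^ n = y ^ n) : x = y := by
  have h : (x / y) ^ r.gcd n = 1 := pow_gcd_eq_one.mpr
    ⟨by rw [div_pow, hr, div_self (pow_ne_zero r hy)],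
      by rw [div_pow, hn, div_self (pow_ne_zero n hy)]⟩
  rwa [hrn.gcd_eq_one, pow_one, div_eq_one_iff_eq hy] at h

theorem exists_ne_pow_eq_pow_of_not_coprime {F : Type*} [Field F] [Fintype F] {r n : ℕ}
    (hn : n ∣ Fintype.card F - 1) (h : ¬ r.Coprime n) {x : F} (hx : x ≠ 0) :
    ∃ y ≠ x, y ^ r = x ^ r ∧ y ^ n = x ^ n := by
  classical
  obtain ⟨ζ, hζ1, hζr, hζn⟩ :=
    exists_ne_one_pow_eq_one_of_not_coprime (G := Fˣ) (by rwa [Fintype.card_units]) h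
  refine ⟨x * ζ, ?_, ?_, ?_⟩
  · simpa [hx] using hζ1
  · rw [mul_pow, ← Units.val_pow_eq_pow_val, hζr, Units.val_one, mul_one]
  · rw [mul_pow, ← Units.val_pow_eq_pow_val, hζn, Units.val_one, mul_one]

theorem Set.pair_eq_pair_iff_ne {α : Type*} {a b x y : α} (hab : a ≠ b) (hx : x = a ∨ x = b)
    (hy : y = a ∨ y = b) : ({x, y} : Set α) = {a, b} ↔ x ≠ y := by
  rw [Set.pair_eq_pair_iff]
  rcases hx with rfl | rfl <;> rcases hy with rfl | rfl <;> simp [hab, hab.symm]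

section PiecewisePower

variable {F : Type*} [Field F] [Fintype F]

theorem FiniteField.exists_pow_card_div_two_eq_neg_one (hF : ringChar F ≠ 2) :
    ∃ x : F, x ≠ 0 ∧ x ^ (Fintype.card F / 2) = -1 := by
  obtain ⟨x, hx⟩ := exists_nonsquare hF
  have hx0 : x ≠ 0 := by rintro rfl; exact hx IsSquare.zero
  exact ⟨x, hx0, (pow_dichotomy hF hx0).resolve_left (mt (isSquare_iff hF hx0).mpr hx)⟩

theorem FiniteField.card_div_two_dvd_card_sub_one (hF : ringChar F ≠ 2) :
    Fintype.card F / 2 ∣ Fintype.card F - 1 :=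
  ⟨2, by rw [mul_comm, Nat.two_mul_odd_div_two (odd_card_of_char_ne_two hF)]⟩

variable (F) in
structure IsPiecewisePower (f : F → F) (a₁ a₂ : F) (r₁ r₂ : ℕ) : Prop where
  map_zero : f 0 = 0
  apply_of_nonsquare : ∀ x : F, x ^ (Fintype.card F / 2) = -1 → f x = a₁ * x ^ r₁
  apply_of_square : ∀ x : F, x ^ (Fintype.card F / 2) = 1 → f x = a₂ * x ^ r₂

namespace IsPiecewisePower

variable {f : F → F} {a₁ a₂ : F} {r₁ r₂ : ℕ}

theorem of_formula (hF : ringChar F ≠ 2) (hr₁ : r₁ ≠ 0) (hr₂ : r₂ ≠ 0)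
    (hf : ∀ x : F, f x = a₁ / 2 * x ^ r₁ * (1 - x ^ (Fintype.card F / 2)) +
      a₂ / 2 * x ^ r₂ * (1 + x ^ (Fintype.card F / 2))) :
    IsPiecewisePower F f a₁ a₂ r₁ r₂ := by
  have h2 : (2 : F) ≠ 0 := Ring.two_ne_zero hF
  have hq : Fintype.card F / 2 ≠ 0 := by have := Fintype.one_lt_card (α := F); omega
  refine ⟨by simp [hf, hr₁, hr₂, hq], fun x hx => ?_, fun x hx => ?_⟩ <;>
    · rw [hf, hx]; field_simp; ring

theorem pow_card_div_two_apply_of_nonsquare (hf : IsPiecewisePower F f a₁ a₂ r₁ r₂) {x : F}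
    (hx : x ^ (Fintype.card F / 2) = -1) :
    f x ^ (Fintype.card F / 2) = (-1) ^ r₁ * a₁ ^ (Fintype.card F / 2) := by
  rw [hf.apply_of_nonsquare x hx, mul_pow, pow_right_comm, hx, mul_comm]

theorem pow_card_div_two_apply_of_square (hf : IsPiecewisePower F f a₁ a₂ r₁ r₂) {x : F}
    (hx : x ^ (Fintype.card F / 2) = 1) :
    f x ^ (Fintype.card F / 2) = a₂ ^ (Fintype.card F / 2) := by
  rw [hf.apply_of_square x hx, mul_pow, pow_right_comm, hx, one_pow, mul_one]

theorem apply_eq_zero_iff (hF : ringChar F ≠ 2) (ha₁ : a₁ ≠ 0) (ha₂ : a₂ ≠ 0)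
    (hf : IsPiecewisePower F f a₁ a₂ r₁ r₂) {x : F} : f x = 0 ↔ x = 0 := by
  refine ⟨fun hfx => ?_, fun hx => hx ▸ hf.map_zero⟩
  by_contra hx
  rcases pow_dichotomy hF hx with hxs | hxs
  · rw [hf.apply_of_square x hxs] at hfx
    exact mul_ne_zero ha₂ (pow_ne_zero r₂ hx) hfx
  · rw [hf.apply_of_nonsquare x hxs] at hfx
    exact mul_ne_zero ha₁ (pow_ne_zero r₁ hx) hfx

theorem injective (hF : ringChar F ≠ 2) (ha₁ : a₁ ≠ 0) (ha₂ : a₂ ≠ 0)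
    (hf : IsPiecewisePower F f a₁ a₂ r₁ r₂) (h₁ : r₁.Coprime (Fintype.card F / 2))
    (h₂ : r₂.Coprime (Fintype.card F / 2))
    (hε : (-1) ^ r₁ * a₁ ^ (Fintype.card F / 2) ≠ a₂ ^ (Fintype.card F / 2)) :
    Injective f := by
  intro x y hxy
  rcases eq_or_ne y 0 with rfl | hy
  · rwa [hf.map_zero, hf.apply_eq_zero_iff hF ha₁ ha₂] at hxy
  have hx : x ≠ 0 := by
    rintro rfl
    rw [hf.map_zero, eq_comm, hf.apply_eq_zero_iff hF ha₁ ha₂] at hxy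
    exact hy hxy
  rcases pow_dichotomy hF hx with hxs | hxs <;> rcases pow_dichotomy hF hy with hys | hys
  · exact eq_of_pow_eq_pow_of_coprime hy h₂ (mul_left_cancel₀ ha₂ (by
      rw [← hf.apply_of_square x hxs, ← hf.apply_of_square y hys, hxy])) (hxs.trans hys.symm)
  · refine absurd ?_ hε
    rw [← hf.pow_card_div_two_apply_of_square hxs, hxy,
      hf.pow_card_div_two_apply_of_nonsquare hys]
  · refine absurd ?_ hε
    rw [← hf.pow_card_div_two_apply_of_square hys, ← hxy,
      hf.pow_card_div_two_apply_of_nonsquare hxs]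
  · exact eq_of_pow_eq_pow_of_coprime hy h₁ (mul_left_cancel₀ ha₁ (by
      rw [← hf.apply_of_nonsquare x hxs, ← hf.apply_of_nonsquare y hys, hxy])) (hxs.trans hys.symm)

theorem coprime_left_of_injective (hF : ringChar F ≠ 2) (hf : IsPiecewisePower F f a₁ a₂ r₁ r₂)
    (hinj : Injective f) : r₁.Coprime (Fintype.card F / 2) := by
  by_contra h
  obtain ⟨x, hx0, hx⟩ := exists_pow_card_div_two_eq_neg_one hF
  obtain ⟨y, hyx, hyr, hys⟩ :=
    exists_ne_pow_eq_pow_of_not_coprime (card_div_two_dvd_card_sub_one hF) h hx0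
  refine hyx (hinj ?_)
  rw [hf.apply_of_nonsquare y (hys.trans hx), hf.apply_of_nonsquare x hx, hyr]

theorem coprime_right_of_injective (hF : ringChar F ≠ 2) (hf : IsPiecewisePower F f a₁ a₂ r₁ r₂)
    (hinj : Injective f) : r₂.Coprime (Fintype.card F / 2) := by
  by_contra h
  obtain ⟨y, hy1, hyr, hys⟩ :=
    exists_ne_pow_eq_pow_of_not_coprime (card_div_two_dvd_card_sub_one hF) h one_ne_zero
  refine hy1 (hinj ?_)
  rw [hf.apply_of_square y (by rw [hys, one_pow]), hf.apply_of_square 1 (one_pow _), hyr]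

theorem ne_of_surjective (hF : ringChar F ≠ 2) (hf : IsPiecewisePower F f a₁ a₂ r₁ r₂)
    (hsurj : Surjective f) :
    (-1) ^ r₁ * a₁ ^ (Fintype.card F / 2) ≠ a₂ ^ (Fintype.card F / 2) := by
  intro hε
  have hval : ∀ y : F, y ≠ 0 → y ^ (Fintype.card F / 2) = a₂ ^ (Fintype.card F / 2) := by
    intro y hy
    obtain ⟨x, rfl⟩ := hsurj y
    have hx : x ≠ 0 := by rintro rfl; exact hy hf.map_zero
    rcases pow_dichotomy hF hx with hxs | hxs
    · exact hf.pow_card_div_two_apply_of_square hxs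
    · exact (hf.pow_card_div_two_apply_of_nonsquare hxs).trans hε
  obtain ⟨n, hn0, hn⟩ := exists_pow_card_div_two_eq_neg_one hF
  have h := (hval n hn0).trans (hval 1 one_ne_zero).symm
  rw [hn, one_pow] at h
  exact Ring.neg_one_ne_one_of_char_ne_two hF h

theorem bijective_iff (hF : ringChar F ≠ 2) (ha₁ : a₁ ≠ 0) (ha₂ : a₂ ≠ 0)
    (hf : IsPiecewisePower F f a₁ a₂ r₁ r₂) :
    Bijective f ↔ r₁.Coprime (Fintype.card F / 2) ∧ r₂.Coprime (Fintype.card F / 2) ∧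
      (-1) ^ r₁ * a₁ ^ (Fintype.card F / 2) ≠ a₂ ^ (Fintype.card F / 2) :=
  ⟨fun h => ⟨hf.coprime_left_of_injective hF h.1, hf.coprime_right_of_injective hF h.1,
      hf.ne_of_surjective hF h.2⟩,
    fun ⟨h₁, h₂, hε⟩ => Finite.injective_iff_bijective.mp (hf.injective hF ha₁ ha₂ h₁ h₂ hε)⟩

end IsPiecewisePower

end PiecewisePower

theorem stmt16_general {F : Type*} [Field F] [Fintype F]
    (hodd : Odd (Fintype.card F))
    (a₁ a₂ : F) (ha₁ : a₁ ≠ 0) (ha₂ : a₂ ≠ 0)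
    (r₁ r₂ : ℕ) (hr₁ : 0 < r₁) (hr₂ : 0 < r₂)
    (f : F → F)
    (hfdef : ∀ x : F,
      f x = a₁ / 2 * x ^ r₁ * (1 - x ^ ((Fintype.card F - 1) / 2)) +
            a₂ / 2 * x ^ r₂ * (1 + x ^ ((Fintype.card F - 1) / 2))) :
    Function.Bijective f ↔
      (Nat.gcd (r₁ * r₂) ((Fintype.card F - 1) / 2) = 1 ∧
        ({(-1 : F) ^ r₁ * a₁ ^ ((Fintype.card F - 1) / 2),
            a₂ ^ ((Fintype.card F - 1) / 2)} : Set F) = {-1, 1}) := by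
  have hF : ringChar F ≠ 2 := fun h => by
    have := even_card_of_char_two h
    rw [Nat.odd_iff] at hodd
    omega
  have hq : (Fintype.card F - 1) / 2 = Fintype.card F / 2 := by
    obtain ⟨k, hk⟩ := hodd
    omega
  rw [hq] at hfdef ⊢
  have hf := IsPiecewisePower.of_formula hF hr₁.ne' hr₂.ne' hfdef
  have hε₁ : (-1) ^ r₁ * a₁ ^ (Fintype.card F / 2) = -1 ∨
      (-1) ^ r₁ * a₁ ^ (Fintype.card F / 2) = 1 := by
    rcases neg_one_pow_eq_or F r₁ with h | h <;> rcases pow_dichotomy hF ha₁ with h' | h' <;>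
      simp [h, h']
  rw [hf.bijective_iff hF ha₁ ha₂, ← Nat.Coprime, Nat.coprime_mul_iff_left, and_assoc,
    Set.pair_eq_pair_iff_ne (Ring.neg_one_ne_one_of_char_ne_two hF) hε₁
      (pow_dichotomy hF ha₂).symm]

/-- Lemma 4.4: Let `q` be an odd prime power, `γ` a primitive element of `F_q`,
`a₁, a₂ ∈ F_q^*`, and `r₁, r₂` positive integers. Define
`f(x) = (a₁/2)x^{r₁}(1 − x^{(q−1)/2}) + (a₂/2)x^{r₂}(1 + x^{(q−1)/2})`. Then `f` is a
permutation of `F_q` iff `gcd(r₁r₂, (q−1)/2) = 1` and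
`{(−1)^{r₁}a₁^{(q−1)/2}, a₂^{(q−1)/2}} = {−1, 1}`. -/
theorem stmt16 {F : Type*} [Field F] [Fintype F]
    (hodd : Odd (Fintype.card F))
    (γ : Fˣ) (hγ : ∀ x : Fˣ, x ∈ Subgroup.zpowers γ)
    (a₁ a₂ : F) (ha₁ : a₁ ≠ 0) (ha₂ : a₂ ≠ 0)
    (r₁ r₂ : ℕ) (hr₁ : 0 < r₁) (hr₂ : 0 < r₂)
    (f : F → F)
    (hfdef : ∀ x : F,
      f x = a₁ / 2 * x ^ r₁ * (1 - x ^ ((Fintype.card F - 1) / 2)) +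
            a₂ / 2 * x ^ r₂ * (1 + x ^ ((Fintype.card F - 1) / 2))) :
    Function.Bijective f ↔
      (Nat.gcd (r₁ * r₂) ((Fintype.card F - 1) / 2) = 1 ∧
        ({(-1 : F) ^ r₁ * a₁ ^ ((Fintype.card F - 1) / 2),
            a₂ ^ ((Fintype.card F - 1) / 2)} : Set F) = {-1, 1}) :=
  stmt16_general hodd a₁ a₂ ha₁ ha₂ r₁ r₂ hr₁ hr₂ f hfdef
end

section
/- Let q be an odd prime power, γ a primitive element of F_q, a₁, a₂ ∈ F_q^*, and r₁, r₂ positive integers. Define f : F_q → F_q by f(0) = 0, f(x) = a₁x^{r₁} for x a non-square in F_q^*, and f(x) = a₂x^{r₂} for x a nonzero square. Then: (i) if r₁ is odd, f is a permutation of F_q if and only if gcd(r₁r₂, (q−1)/2) = 1 and a₁a₂ is a nonzero square in F_q; (ii) if r₁ is even, f is a permutation of F_q if and only if gcd(r₁r₂, (q−1)/2) = 1 and a₁a₂ is a non-square in F_q. -/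
/-!
Let `m = (q - 1) / 2`. On `F_q^*` the map `x ↦ x ^ m` is `1` on squares and `-1` on non-squares,
so `f` sends the squares into the square class of `a₂` and the non-squares into that of
`(-1) ^ r₁ a₁`. Both classes have `m` elements, so `f` is a permutation iff these classes differ
and `x ↦ x ^ rᵢ` is injective on each class; as the squares form a cyclic group of order `m`,
the latter means `gcd (rᵢ, m) = 1`.
-/

open Function

lemma eq_of_pow_eq_of_pow_eq_of_coprime {G₀ : Type*} [CommGroupWithZero G₀] {x y : G₀}
    {r m : ℕ} (hy : y ≠ 0) (hr : x ^ r = y ^ r) (hm : x ^ m = y ^ m) (hrm : r.Coprime m) :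
    x = y := by
  have h : (x / y) ^ r.gcd m = 1 := pow_gcd_eq_one.mpr
    ⟨by rw [div_pow, hr, div_self (pow_ne_zero _ hy)],
      by rw [div_pow, hm, div_self (pow_ne_zero _ hy)]⟩
  rwa [hrm.gcd_eq_one, pow_one, div_eq_one_iff_eq hy] at h

lemma exists_ne_zero_eq_sq_iff_isSquare {M₀ : Type*} [MonoidWithZero M₀] [NoZeroDivisors M₀]
    {x : M₀} (hx : x ≠ 0) : (∃ y, y ≠ 0 ∧ x = y ^ 2) ↔ IsSquare x := by
  rw [isSquare_iff_exists_sq]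
  refine ⟨fun ⟨y, _, h⟩ => ⟨y, h⟩, fun ⟨y, h⟩ => ⟨y, ?_, h⟩⟩
  rintro rfl
  exact hx (by simpa using h)

namespace FiniteField

variable {F : Type*} [Field F] [Fintype F]

lemma pow_card_div_two_eq_neg_one_iff (hF : ringChar F ≠ 2) {x : F} (hx : x ≠ 0) :
    x ^ (Fintype.card F / 2) = -1 ↔ ¬IsSquare x := by
  have hne := Ring.neg_one_ne_one_of_char_ne_two hF
  rw [isSquare_iff hF hx]
  rcases pow_dichotomy hF hx with h | h <;> simp [h, hne, hne.symm]

/-- `s` is an element of prime order `p ∣ gcd (r, #F / 2)`, by Cauchy's theorem in `Fˣ`. -/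
lemma exists_isSquare_ne_one_pow_eq_one (hF : ringChar F ≠ 2) {r : ℕ}
    (hr : ¬r.Coprime (Fintype.card F / 2)) :
    ∃ s : F, s ≠ 0 ∧ s ≠ 1 ∧ IsSquare s ∧ s ^ r = 1 := by
  obtain ⟨p, hp, hpr, hpm⟩ := Nat.Prime.not_coprime_iff_dvd.mp hr
  have : Fact p.Prime := ⟨hp⟩
  have hpq : p ∣ Nat.card Fˣ := by
    rw [Nat.card_units, Nat.card_eq_fintype_card,
      ← Nat.two_mul_odd_div_two (odd_card_of_char_ne_two hF)]
    exact hpm.mul_left 2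
  obtain ⟨s, hs⟩ := exists_prime_orderOf_dvd_card' p hpq
  have hpow {n : ℕ} (hn : p ∣ n) : (s : F) ^ n = 1 := by
    rw [← Units.val_pow_eq_pow_val, (orderOf_dvd_iff_pow_eq_one.mp (hs ▸ hn)), Units.val_one]
  refine ⟨s, s.ne_zero, fun h => hp.one_lt.ne' ?_, (isSquare_iff hF s.ne_zero).mpr (hpow hpm),
    hpow hpr⟩
  rw [← hs, orderOf_eq_one_iff]
  exact Units.val_eq_one.mp h

open Classical in
noncomputable def piecewisePow (a₁ a₂ : F) (r₁ r₂ : ℕ) (x : F) : F :=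
  if x = 0 then 0 else if IsSquare x then a₂ * x ^ r₂ else a₁ * x ^ r₁

section piecewisePow

variable {a₁ a₂ x : F} {r₁ r₂ : ℕ}

@[simp]
lemma piecewisePow_zero : piecewisePow a₁ a₂ r₁ r₂ 0 = 0 := by
  simp [piecewisePow]

lemma piecewisePow_of_isSquare (hx : x ≠ 0) (h : IsSquare x) :
    piecewisePow a₁ a₂ r₁ r₂ x = a₂ * x ^ r₂ := by
  simp [piecewisePow, hx, h]

lemma piecewisePow_of_not_isSquare (hx : x ≠ 0) (h : ¬IsSquare x) :
    piecewisePow a₁ a₂ r₁ r₂ x = a₁ * x ^ r₁ := by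
  simp [piecewisePow, hx, h]

lemma piecewisePow_ne_zero (ha₁ : a₁ ≠ 0) (ha₂ : a₂ ≠ 0) (hx : x ≠ 0) :
    piecewisePow a₁ a₂ r₁ r₂ x ≠ 0 := by
  by_cases h : IsSquare x
  · rw [piecewisePow_of_isSquare hx h]; exact mul_ne_zero ha₂ (pow_ne_zero _ hx)
  · rw [piecewisePow_of_not_isSquare hx h]; exact mul_ne_zero ha₁ (pow_ne_zero _ hx)

lemma pow_card_div_two_piecewisePow_of_isSquare (hF : ringChar F ≠ 2) (hx : x ≠ 0)
    (h : IsSquare x) :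
    piecewisePow a₁ a₂ r₁ r₂ x ^ (Fintype.card F / 2) = a₂ ^ (Fintype.card F / 2) := by
  rw [piecewisePow_of_isSquare hx h, mul_pow, pow_right_comm, (isSquare_iff hF hx).mp h, one_pow,
    mul_one]

lemma pow_card_div_two_piecewisePow_of_not_isSquare (hF : ringChar F ≠ 2) (hx : x ≠ 0)
    (h : ¬IsSquare x) :
    piecewisePow a₁ a₂ r₁ r₂ x ^ (Fintype.card F / 2) =
      a₁ ^ (Fintype.card F / 2) * (-1) ^ r₁ := by
  rw [piecewisePow_of_not_isSquare hx h, mul_pow, pow_right_comm,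
    (pow_card_div_two_eq_neg_one_iff hF hx).mpr h]

lemma injective_piecewisePow (hF : ringChar F ≠ 2) (ha₁ : a₁ ≠ 0) (ha₂ : a₂ ≠ 0)
    (h₁ : r₁.Coprime (Fintype.card F / 2)) (h₂ : r₂.Coprime (Fintype.card F / 2))
    (hclass : a₂ ^ (Fintype.card F / 2) ≠ a₁ ^ (Fintype.card F / 2) * (-1) ^ r₁) :
    Injective (piecewisePow a₁ a₂ r₁ r₂) := by
  intro x y hxy
  rcases eq_or_ne x 0 with rfl | hx
  · by_contra hy
    exact piecewisePow_ne_zero ha₁ ha₂ (Ne.symm hy) (by rw [← hxy, piecewisePow_zero])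
  rcases eq_or_ne y 0 with rfl | hy
  · exact absurd (by rw [hxy, piecewisePow_zero]) (piecewisePow_ne_zero ha₁ ha₂ hx)
  by_cases hsx : IsSquare x <;> by_cases hsy : IsSquare y
  · refine eq_of_pow_eq_of_pow_eq_of_coprime hy ?_ ?_ h₂
    · rw [piecewisePow_of_isSquare hx hsx, piecewisePow_of_isSquare hy hsy] at hxy
      exact mul_left_cancel₀ ha₂ hxy
    · rw [(isSquare_iff hF hx).mp hsx, (isSquare_iff hF hy).mp hsy]
  · refine absurd ?_ hclass
    rw [← pow_card_div_two_piecewisePow_of_isSquare hF hx hsx, hxy,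
      pow_card_div_two_piecewisePow_of_not_isSquare hF hy hsy]
  · refine absurd ?_ hclass
    rw [← pow_card_div_two_piecewisePow_of_isSquare hF hy hsy, ← hxy,
      pow_card_div_two_piecewisePow_of_not_isSquare hF hx hsx]
  · refine eq_of_pow_eq_of_pow_eq_of_coprime hy ?_ ?_ h₁
    · rw [piecewisePow_of_not_isSquare hx hsx, piecewisePow_of_not_isSquare hy hsy] at hxy
      exact mul_left_cancel₀ ha₁ hxy
    · rw [(pow_card_div_two_eq_neg_one_iff hF hx).mpr hsx,
        (pow_card_div_two_eq_neg_one_iff hF hy).mpr hsy]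

lemma coprime_right_of_injective_piecewisePow (hF : ringChar F ≠ 2)
    (hf : Injective (piecewisePow a₁ a₂ r₁ r₂)) : r₂.Coprime (Fintype.card F / 2) := by
  by_contra hr
  obtain ⟨s, hs0, hs1, hsq, hsr⟩ := exists_isSquare_ne_one_pow_eq_one hF hr
  refine hs1 (hf ?_)
  rw [piecewisePow_of_isSquare hs0 hsq, piecewisePow_of_isSquare one_ne_zero IsSquare.one, hsr,
    one_pow]

lemma coprime_left_of_injective_piecewisePow (hF : ringChar F ≠ 2)
    (hf : Injective (piecewisePow a₁ a₂ r₁ r₂)) : r₁.Coprime (Fintype.card F / 2) := by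
  by_contra hr
  obtain ⟨s, hs0, hs1, hsq, hsr⟩ := exists_isSquare_ne_one_pow_eq_one hF hr
  obtain ⟨n, hn⟩ := exists_nonsquare hF
  have hn0 : n ≠ 0 := by rintro rfl; exact hn IsSquare.zero
  have hns : ¬IsSquare (n * s) := fun h => hn (by simpa [hs0] using h.div hsq)
  refine hs1 (mul_left_cancel₀ hn0 ((hf ?_).trans (mul_one n).symm))
  rw [piecewisePow_of_not_isSquare (mul_ne_zero hn0 hs0) hns, piecewisePow_of_not_isSquare hn0 hn,
    mul_pow, hsr, mul_one]

/-- If the two square classes agree, every value `f x` with `x ≠ 0` lies in the class of `a₂`,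
so `f` misses the other class. -/
lemma pow_card_div_two_ne_of_surjective_piecewisePow (hF : ringChar F ≠ 2) (ha₂ : a₂ ≠ 0)
    (hf : Surjective (piecewisePow a₁ a₂ r₁ r₂)) :
    a₂ ^ (Fintype.card F / 2) ≠ a₁ ^ (Fintype.card F / 2) * (-1) ^ r₁ := by
  intro hclass
  obtain ⟨n, hn⟩ := exists_nonsquare hF
  have hn0 : n ≠ 0 := by rintro rfl; exact hn IsSquare.zero
  obtain ⟨x, hx⟩ := hf (n * a₂)
  have hx0 : x ≠ 0 := by
    rintro rfl
    exact mul_ne_zero hn0 ha₂ (by rw [← hx, piecewisePow_zero])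
  have hval :
      piecewisePow a₁ a₂ r₁ r₂ x ^ (Fintype.card F / 2) = a₂ ^ (Fintype.card F / 2) := by
    by_cases hsx : IsSquare x
    · exact pow_card_div_two_piecewisePow_of_isSquare hF hx0 hsx
    · rw [pow_card_div_two_piecewisePow_of_not_isSquare hF hx0 hsx, hclass]
  rw [hx, mul_pow, (pow_card_div_two_eq_neg_one_iff hF hn0).mpr hn, neg_one_mul,
    neg_eq_iff_add_eq_zero, ← two_mul] at hval
  exact mul_ne_zero (Ring.two_ne_zero hF) (pow_ne_zero _ ha₂) hval

theorem bijective_piecewisePow_iff (hF : ringChar F ≠ 2) (ha₁ : a₁ ≠ 0) (ha₂ : a₂ ≠ 0) :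
    Bijective (piecewisePow a₁ a₂ r₁ r₂) ↔
      r₁.Coprime (Fintype.card F / 2) ∧ r₂.Coprime (Fintype.card F / 2) ∧
        a₂ ^ (Fintype.card F / 2) ≠ a₁ ^ (Fintype.card F / 2) * (-1) ^ r₁ := by
  refine ⟨fun hf => ⟨coprime_left_of_injective_piecewisePow hF hf.1,
      coprime_right_of_injective_piecewisePow hF hf.1,
      pow_card_div_two_ne_of_surjective_piecewisePow hF ha₂ hf.2⟩,
    fun ⟨h₁, h₂, hclass⟩ => ?_⟩
  exact Finite.injective_iff_bijective.mp (injective_piecewisePow hF ha₁ ha₂ h₁ h₂ hclass)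

lemma pow_card_div_two_ne_iff_isSquare_mul_iff_odd (hF : ringChar F ≠ 2) (ha₁ : a₁ ≠ 0)
    (ha₂ : a₂ ≠ 0) (r : ℕ) :
    a₂ ^ (Fintype.card F / 2) ≠ a₁ ^ (Fintype.card F / 2) * (-1) ^ r ↔
      (IsSquare (a₁ * a₂) ↔ Odd r) := by
  have hne := Ring.neg_one_ne_one_of_char_ne_two hF
  rw [isSquare_iff hF (mul_ne_zero ha₁ ha₂), mul_pow]
  rcases pow_dichotomy hF ha₁ with h₁ | h₁ <;>
    rcases pow_dichotomy hF ha₂ with h₂ | h₂ <;>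
    rcases Nat.even_or_odd r with hr | hr <;>
    simp [h₁, h₂, hr, hr.neg_one_pow, hne, hne.symm, Nat.not_odd_iff_even.mpr]

end piecewisePow

end FiniteField

open FiniteField

theorem stmt17_general {F : Type*} [Field F] [Fintype F]
    (hodd : Odd (Fintype.card F))
    (a₁ a₂ : F) (ha₁ : a₁ ≠ 0) (ha₂ : a₂ ≠ 0)
    (r₁ r₂ : ℕ)
    (f : F → F)
    (hf0 : f 0 = 0)
    (hfns : ∀ x : F, x ≠ 0 → ¬(∃ y : F, y ≠ 0 ∧ x = y ^ 2) → f x = a₁ * x ^ r₁)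
    (hfs : ∀ x : F, x ≠ 0 → (∃ y : F, y ≠ 0 ∧ x = y ^ 2) → f x = a₂ * x ^ r₂) :
    (Odd r₁ →
      (Function.Bijective f ↔
        (Nat.gcd (r₁ * r₂) ((Fintype.card F - 1) / 2) = 1 ∧
          ∃ y : F, y ≠ 0 ∧ a₁ * a₂ = y ^ 2))) ∧
    (Even r₁ →
      (Function.Bijective f ↔
        (Nat.gcd (r₁ * r₂) ((Fintype.card F - 1) / 2) = 1 ∧
          ¬∃ y : F, y ≠ 0 ∧ a₁ * a₂ = y ^ 2))) := by
  have hF : ringChar F ≠ 2 := fun h =>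
    Nat.not_even_iff_odd.mpr hodd (Nat.even_iff.mpr (even_card_iff_char_two.mp h))
  have hf : f = piecewisePow a₁ a₂ r₁ r₂ := by
    funext x
    rcases eq_or_ne x 0 with rfl | hx
    · rw [hf0, piecewisePow_zero]
    by_cases hsq : IsSquare x
    · rw [hfs x hx ((exists_ne_zero_eq_sq_iff_isSquare hx).mpr hsq),
        piecewisePow_of_isSquare hx hsq]
    · rw [hfns x hx (mt (exists_ne_zero_eq_sq_iff_isSquare hx).mp hsq),
        piecewisePow_of_not_isSquare hx hsq]
  have hm : (Fintype.card F - 1) / 2 = Fintype.card F / 2 := by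
    obtain ⟨k, hk⟩ := hodd
    omega
  subst hf
  rw [← Nat.coprime_iff_gcd_eq_one, hm, Nat.coprime_mul_iff_left,
    bijective_piecewisePow_iff hF ha₁ ha₂,
    pow_card_div_two_ne_iff_isSquare_mul_iff_odd hF ha₁ ha₂,
    exists_ne_zero_eq_sq_iff_isSquare (mul_ne_zero ha₁ ha₂)]
  exact ⟨fun hr => by simp [hr, and_assoc],
    fun hr => by simp [Nat.not_odd_iff_even.mpr hr, and_assoc]⟩

/-- Corollary 4.5: Let `q` be an odd prime power, `γ` a primitive element of `F_q`,
`a₁, a₂ ∈ F_q^*`, `r₁, r₂` positive integers, and define `f(0) = 0`,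
`f(x) = a₁x^{r₁}` for `x` a non-square in `F_q^*`, `f(x) = a₂x^{r₂}` for `x` a
nonzero square. Then: (i) if `r₁` is odd, `f` is a permutation of `F_q` iff
`gcd(r₁r₂, (q−1)/2) = 1` and `a₁a₂` is a nonzero square; (ii) if `r₁` is even, `f`
is a permutation of `F_q` iff `gcd(r₁r₂, (q−1)/2) = 1` and `a₁a₂` is a non-square. -/
theorem stmt17 {F : Type*} [Field F] [Fintype F]
    (hodd : Odd (Fintype.card F))
    (γ : Fˣ) (hγ : ∀ x : Fˣ, x ∈ Subgroup.zpowers γ)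
    (a₁ a₂ : F) (ha₁ : a₁ ≠ 0) (ha₂ : a₂ ≠ 0)
    (r₁ r₂ : ℕ) (hr₁ : 0 < r₁) (hr₂ : 0 < r₂)
    (f : F → F)
    (hf0 : f 0 = 0)
    (hfns : ∀ x : F, x ≠ 0 → ¬(∃ y : F, y ≠ 0 ∧ x = y ^ 2) → f x = a₁ * x ^ r₁)
    (hfs : ∀ x : F, x ≠ 0 → (∃ y : F, y ≠ 0 ∧ x = y ^ 2) → f x = a₂ * x ^ r₂) :
    (Odd r₁ →
      (Function.Bijective f ↔
        (Nat.gcd (r₁ * r₂) ((Fintype.card F - 1) / 2) = 1 ∧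
          ∃ y : F, y ≠ 0 ∧ a₁ * a₂ = y ^ 2))) ∧
    (Even r₁ →
      (Function.Bijective f ↔
        (Nat.gcd (r₁ * r₂) ((Fintype.card F - 1) / 2) = 1 ∧
          ¬∃ y : F, y ≠ 0 ∧ a₁ * a₂ = y ^ 2))) :=
  stmt17_general hodd a₁ a₂ ha₁ ha₂ r₁ r₂ f hf0 hfns hfs
end

section
/- Let q be an odd prime power and γ a primitive element of F_q. Consider the set of all bijections f : F_q → F_q of the form: f(0) = 0, f(x) = a₁x^{r₁} for x a non-square in F_q^*, f(x) = a₂x^{r₂} for x a nonzero square, where a₁, a₂ ∈ F_q^* and r₁, r₂ are integers with 1 ≤ r₁, r₂ ≤ q−1. The number of distinct such permutations of F_q equals (q−1)²·φ((q−1)/2)² / 2, where φ is Euler's totient function. -/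
/-!
Write `m = (q - 1) / 2`. A nonzero `x` is a square iff `x ^ m = 1`, so on the nonzero squares
`x ^ r` only depends on `r mod m`, and on a non-square `γ y` one has
`a (γ y) ^ r = (a γ ^ r) y ^ r`.
Hence every map of the given shape is, in a unique way, `x ↦ b₂ x ^ s₂` on squares and
`x ↦ b₁ (x / γ) ^ s₁` on non-squares with `b₁, b₂ ≠ 0` and `0 ≤ s₁, s₂ < m`. Such a map is a
permutation iff both `y ↦ y ^ sᵢ` permute the squares (a group of order `m`), i.e.
`gcd (sᵢ, m) = 1`, and the images `b₁ □` and `b₂ □` are the two different square classes.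
This leaves `(q - 1)² / 2` choices for `(b₁, b₂)` and `φ(m)²` for the exponents.
-/

open Finset

theorem exists_ne_one_pow_eq_one_of_not_coprime_s18 {G : Type*} [Group G] [Finite G] {m s : ℕ}
    (hm : m ∣ Nat.card G) (hms : ¬ m.Coprime s) : ∃ t : G, t ≠ 1 ∧ t ^ m = 1 ∧ t ^ s = 1 := by
  obtain ⟨p, hp, hpm, hps⟩ := Nat.Prime.not_coprime_iff_dvd.mp hms
  have : Fact p.Prime := ⟨hp⟩
  obtain ⟨t, ht⟩ := exists_prime_orderOf_dvd_card' p (hpm.trans hm)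
  refine ⟨t, fun h => hp.one_lt.ne' (by rw [← ht, h, orderOf_one]), ?_, ?_⟩ <;>
    exact orderOf_dvd_iff_pow_eq_one.mp (ht ▸ ‹_›)

theorem exists_ne_zero_eq_sq_iff {M₀ : Type*} [MonoidWithZero M₀] {x : M₀} (hx : x ≠ 0) :
    (∃ y, y ≠ 0 ∧ x = y ^ 2) ↔ IsSquare x := by
  constructor
  · rintro ⟨y, -, rfl⟩
    exact IsSquare.sq y
  · rintro ⟨y, rfl⟩
    exact ⟨y, left_ne_zero_of_mul hx, sq y |>.symm⟩

theorem ne_zero_of_not_isSquare {M₀ : Type*} [MulZeroClass M₀] {x : M₀} (hx : ¬ IsSquare x) :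
    x ≠ 0 :=
  fun h => hx (h ▸ IsSquare.zero)

namespace FiniteField

variable {F : Type*} [Field F] [Fintype F]

theorem isSquare_mul_iff {x y : F} (hx : x ≠ 0) (hy : y ≠ 0) :
    IsSquare (x * y) ↔ (IsSquare x ↔ IsSquare y) := by
  classical
  rw [← quadraticChar_one_iff_isSquare (mul_ne_zero hx hy), map_mul,
    ← quadraticChar_one_iff_isSquare hx, ← quadraticChar_one_iff_isSquare hy]
  rcases quadraticChar_dichotomy hx with h | h <;>
    rcases quadraticChar_dichotomy hy with h' | h' <;> simp [h, h']

theorem isSquare_mul_pow_iff {b y : F} (hb : b ≠ 0) (hy0 : y ≠ 0) (hy : IsSquare y) (s : ℕ) :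
    IsSquare (b * y ^ s) ↔ IsSquare b := by
  rw [isSquare_mul_iff hb (pow_ne_zero s hy0)]
  simp [hy.pow s]

theorem isSquare_inv_mul {g x : F} (hg : ¬ IsSquare g) (hx : ¬ IsSquare x) :
    IsSquare (g⁻¹ * x) := by
  rw [isSquare_mul_iff (inv_ne_zero (ne_zero_of_not_isSquare hg)) (ne_zero_of_not_isSquare hx),
    isSquare_inv]
  tauto

theorem two_mul_card_div_two (hF : ringChar F ≠ 2) :
    2 * (Fintype.card F / 2) = Fintype.card F - 1 :=
  Nat.two_mul_odd_div_two (odd_card_of_char_ne_two hF)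

theorem injOn_pow_iff_coprime (hF : ringChar F ≠ 2) (s : ℕ) :
    Set.InjOn (· ^ s) {y : F | y ≠ 0 ∧ IsSquare y} ↔ (Fintype.card F / 2).Coprime s := by
  constructor
  · contrapose
    intro hs hinj
    have hdvd : Fintype.card F / 2 ∣ Nat.card Fˣ := by
      rw [Nat.card_units, Nat.card_eq_fintype_card, ← two_mul_card_div_two hF]
      exact dvd_mul_left _ _
    obtain ⟨t, ht1, htm, hts⟩ := exists_ne_one_pow_eq_one_of_not_coprime_s18 hdvd hs
    have hsq : IsSquare (t : F) := (isSquare_iff hF t.ne_zero).mpr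
      (by rw [← Units.val_pow_eq_pow_val, htm, Units.val_one])
    refine ht1 (Units.val_eq_one.mp (hinj ⟨t.ne_zero, hsq⟩ ⟨one_ne_zero, IsSquare.one⟩ ?_))
    show (t : F) ^ s = 1 ^ s
    rw [one_pow, ← Units.val_pow_eq_pow_val, hts, Units.val_one]
  · rintro hs y ⟨hy0, hy⟩ z ⟨hz0, hz⟩ (h : y ^ s = z ^ s)
    have hquot : (y / z) ^ (Fintype.card F / 2) = 1 ∧ (y / z) ^ s = 1 := by
      rw [div_pow, div_pow, (isSquare_iff hF hy0).mp hy, (isSquare_iff hF hz0).mp hz, h,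
        div_self one_ne_zero, div_self (pow_ne_zero _ hz0)]
      exact ⟨rfl, rfl⟩
    exact div_eq_one_iff_eq hz0 |>.mp ((pow_eq_one_iff_of_coprime hs).mp hquot)

theorem not_isSquare_of_forall_mem_zpowers (hF : ringChar F ≠ 2) {γ : Fˣ}
    (hγ : ∀ x : Fˣ, x ∈ Subgroup.zpowers γ) : ¬ IsSquare (γ : F) := by
  intro hsq
  obtain ⟨a, ha⟩ := exists_nonsquare hF
  have ha0 := ne_zero_of_not_isSquare ha
  obtain ⟨k, hk⟩ := Subgroup.mem_zpowers_iff.mp (hγ (Units.mk0 a ha0))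
  apply ha
  rw [← Units.val_mk0 ha0, ← hk, Units.val_zpow_eq_zpow_val]
  exact hsq.zpow k

theorem eq_of_sq_pow_eq_sq_pow (hF : ringChar F ≠ 2) {γ : Fˣ}
    (hγ : ∀ x : Fˣ, x ∈ Subgroup.zpowers γ) {a b : ℕ} (ha : a < Fintype.card F / 2)
    (hb : b < Fintype.card F / 2) (h : ((γ : F) ^ 2) ^ a = ((γ : F) ^ 2) ^ b) : a = b := by
  have hord : orderOf γ = 2 * (Fintype.card F / 2) := by
    rw [orderOf_eq_card_of_forall_mem_zpowers hγ, Nat.card_units, Nat.card_eq_fintype_card,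
      two_mul_card_div_two hF]
  have hord2 : orderOf (γ ^ 2) = Fintype.card F / 2 := by
    rw [orderOf_pow_of_dvd two_ne_zero (hord ▸ dvd_mul_right 2 _), hord,
      Nat.mul_div_cancel_left _ two_pos]
  have hunits : (γ ^ 2) ^ a = (γ ^ 2) ^ b := Units.ext (by push_cast; exact h)
  rw [pow_eq_pow_iff_modEq, hord2] at hunits
  exact hunits.eq_of_lt_of_lt ha hb

end FiniteField

open FiniteField

namespace PiecewiseMonomial

variable {F : Type*} [Field F] [Fintype F]

open Classical in
/-- The branch at `0` is needed because `s₂ = 0` is allowed when `#F = 3`. -/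
noncomputable def normalForm (g b₁ b₂ : F) (s₁ s₂ : ℕ) (x : F) : F :=
  if x = 0 then 0 else if IsSquare x then b₂ * x ^ s₂ else b₁ * (g⁻¹ * x) ^ s₁

variable {g b₁ b₂ : F} {s₁ s₂ : ℕ}

@[simp]
theorem normalForm_zero : normalForm g b₁ b₂ s₁ s₂ 0 = 0 := by
  simp [normalForm]

theorem normalForm_of_isSquare {x : F} (hx0 : x ≠ 0) (hx : IsSquare x) :
    normalForm g b₁ b₂ s₁ s₂ x = b₂ * x ^ s₂ := by
  simp [normalForm, hx0, hx]

theorem normalForm_of_not_isSquare {x : F} (hx : ¬ IsSquare x) :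
    normalForm g b₁ b₂ s₁ s₂ x = b₁ * (g⁻¹ * x) ^ s₁ := by
  simp [normalForm, ne_zero_of_not_isSquare hx, hx]

theorem normalForm_mul (hg : ¬ IsSquare g) {y : F} (hy0 : y ≠ 0) (hy : IsSquare y) :
    normalForm g b₁ b₂ s₁ s₂ (g * y) = b₁ * y ^ s₁ := by
  have hg0 := ne_zero_of_not_isSquare hg
  rw [normalForm_of_not_isSquare (by rw [isSquare_mul_iff hg0 hy0]; tauto),
    inv_mul_cancel_left₀ hg0]

theorem isSquare_normalForm_of_isSquare (hb₂ : b₂ ≠ 0) {x : F} (hx0 : x ≠ 0)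
    (hx : IsSquare x) : IsSquare (normalForm g b₁ b₂ s₁ s₂ x) ↔ IsSquare b₂ := by
  rw [normalForm_of_isSquare hx0 hx, isSquare_mul_pow_iff hb₂ hx0 hx]

theorem isSquare_normalForm_of_not_isSquare (hg : ¬ IsSquare g) (hb₁ : b₁ ≠ 0) {x : F}
    (hx : ¬ IsSquare x) : IsSquare (normalForm g b₁ b₂ s₁ s₂ x) ↔ IsSquare b₁ := by
  have hy0 : g⁻¹ * x ≠ 0 :=
    mul_ne_zero (inv_ne_zero (ne_zero_of_not_isSquare hg)) (ne_zero_of_not_isSquare hx)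
  rw [normalForm_of_not_isSquare hx, isSquare_mul_pow_iff hb₁ hy0 (isSquare_inv_mul hg hx)]

theorem normalForm_eq_zero_iff (hg : ¬ IsSquare g) (hb₁ : b₁ ≠ 0) (hb₂ : b₂ ≠ 0) {x : F} :
    normalForm g b₁ b₂ s₁ s₂ x = 0 ↔ x = 0 := by
  refine ⟨fun h => ?_, fun h => by rw [h, normalForm_zero]⟩
  by_contra hx0
  by_cases hx : IsSquare x
  · rw [normalForm_of_isSquare hx0 hx] at h
    exact mul_ne_zero hb₂ (pow_ne_zero _ hx0) h
  · rw [normalForm_of_not_isSquare hx] at h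
    exact mul_ne_zero hb₁ (pow_ne_zero _ (mul_ne_zero
      (inv_ne_zero (ne_zero_of_not_isSquare hg)) hx0)) h

theorem normalForm_injective (hg : ¬ IsSquare g) (hb₁ : b₁ ≠ 0) (hb₂ : b₂ ≠ 0)
    (h₁ : Set.InjOn (· ^ s₁) {y : F | y ≠ 0 ∧ IsSquare y})
    (h₂ : Set.InjOn (· ^ s₂) {y : F | y ≠ 0 ∧ IsSquare y}) (hb : IsSquare b₁ ↔ ¬ IsSquare b₂) :
    Function.Injective (normalForm g b₁ b₂ s₁ s₂) := by
  intro x y h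
  by_cases hx0 : x = 0
  · rw [hx0, normalForm_zero, eq_comm, normalForm_eq_zero_iff hg hb₁ hb₂] at h
    rw [hx0, h]
  by_cases hy0 : y = 0
  · rw [hy0, normalForm_zero, normalForm_eq_zero_iff hg hb₁ hb₂] at h
    rw [hy0, h]
  have hclass := congrArg IsSquare h
  by_cases hx : IsSquare x <;> by_cases hy : IsSquare y
  · rw [normalForm_of_isSquare hx0 hx, normalForm_of_isSquare hy0 hy] at h
    exact h₂ ⟨hx0, hx⟩ ⟨hy0, hy⟩ (mul_left_cancel₀ hb₂ h)
  · rw [isSquare_normalForm_of_isSquare hb₂ hx0 hx,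
      isSquare_normalForm_of_not_isSquare hg hb₁ hy] at hclass
    tauto
  · rw [isSquare_normalForm_of_not_isSquare hg hb₁ hx,
      isSquare_normalForm_of_isSquare hb₂ hy0 hy] at hclass
    tauto
  · rw [normalForm_of_not_isSquare hx, normalForm_of_not_isSquare hy] at h
    have hg0 := inv_ne_zero (ne_zero_of_not_isSquare hg)
    exact mul_left_cancel₀ hg0 (h₁ ⟨mul_ne_zero hg0 hx0, isSquare_inv_mul hg hx⟩
      ⟨mul_ne_zero hg0 hy0, isSquare_inv_mul hg hy⟩ (mul_left_cancel₀ hb₁ h))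

theorem injOn_pow_of_normalForm_injective (hg : ¬ IsSquare g)
    (h : Function.Injective (normalForm g b₁ b₂ s₁ s₂)) :
    Set.InjOn (· ^ s₁) {y : F | y ≠ 0 ∧ IsSquare y} ∧
      Set.InjOn (· ^ s₂) {y : F | y ≠ 0 ∧ IsSquare y} := by
  constructor
  · rintro y ⟨hy0, hy⟩ z ⟨hz0, hz⟩ (hyz : y ^ s₁ = z ^ s₁)
    refine mul_left_cancel₀ (ne_zero_of_not_isSquare hg) (h ?_)
    rw [normalForm_mul hg hy0 hy, normalForm_mul hg hz0 hz, hyz]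
  · rintro y ⟨hy0, hy⟩ z ⟨hz0, hz⟩ (hyz : y ^ s₂ = z ^ s₂)
    refine h ?_
    rw [normalForm_of_isSquare hy0 hy, normalForm_of_isSquare hz0 hz, hyz]

theorem isSquare_iff_not_of_normalForm_surjective (hg : ¬ IsSquare g) (hb₁ : b₁ ≠ 0)
    (hb₂ : b₂ ≠ 0) (h : Function.Surjective (normalForm g b₁ b₂ s₁ s₂)) :
    IsSquare b₁ ↔ ¬ IsSquare b₂ := by
  obtain ⟨c, hc0, hc⟩ : ∃ c : F, c ≠ 0 ∧ (IsSquare c ↔ ¬ IsSquare b₂) := by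
    by_cases hb : IsSquare b₂
    · exact ⟨g, ne_zero_of_not_isSquare hg, by tauto⟩
    · exact ⟨1, one_ne_zero, by simp [hb]⟩
  obtain ⟨x, rfl⟩ := h c
  have hx0 : x ≠ 0 := by rintro rfl; exact hc0 normalForm_zero
  by_cases hx : IsSquare x
  · rw [isSquare_normalForm_of_isSquare hb₂ hx0 hx] at hc
    tauto
  · rw [isSquare_normalForm_of_not_isSquare hg hb₁ hx] at hc
    tauto

theorem normalForm_bijective_iff (hF : ringChar F ≠ 2) (hg : ¬ IsSquare g) (hb₁ : b₁ ≠ 0)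
    (hb₂ : b₂ ≠ 0) :
    Function.Bijective (normalForm g b₁ b₂ s₁ s₂) ↔
      (Fintype.card F / 2).Coprime s₁ ∧ (Fintype.card F / 2).Coprime s₂ ∧
        (IsSquare b₁ ↔ ¬ IsSquare b₂) := by
  rw [← injOn_pow_iff_coprime hF, ← injOn_pow_iff_coprime hF]
  constructor
  · intro h
    obtain ⟨h₁, h₂⟩ := injOn_pow_of_normalForm_injective hg h.1
    exact ⟨h₁, h₂, isSquare_iff_not_of_normalForm_surjective hg hb₁ hb₂ h.2⟩
  · rintro ⟨h₁, h₂, hb⟩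
    exact Finite.injective_iff_bijective.mp (normalForm_injective hg hb₁ hb₂ h₁ h₂ hb)

theorem exists_monomial_form_iff (hF : ringChar F ≠ 2) (hg : ¬ IsSquare g) (f : F → F) :
    (∃ (a₁ a₂ : F) (r₁ r₂ : ℕ),
        a₁ ≠ 0 ∧ a₂ ≠ 0 ∧
        1 ≤ r₁ ∧ r₁ ≤ Fintype.card F - 1 ∧ 1 ≤ r₂ ∧ r₂ ≤ Fintype.card F - 1 ∧
        f 0 = 0 ∧
        (∀ x : F, x ≠ 0 → ¬(∃ y : F, y ≠ 0 ∧ x = y ^ 2) → f x = a₁ * x ^ r₁) ∧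
        (∀ x : F, x ≠ 0 → (∃ y : F, y ≠ 0 ∧ x = y ^ 2) → f x = a₂ * x ^ r₂)) ↔
      ∃ (b₁ b₂ : F) (s₁ s₂ : ℕ), b₁ ≠ 0 ∧ b₂ ≠ 0 ∧
        s₁ < Fintype.card F / 2 ∧ s₂ < Fintype.card F / 2 ∧ normalForm g b₁ b₂ s₁ s₂ = f := by
  have hg0 := ne_zero_of_not_isSquare hg
  have h2m := two_mul_card_div_two hF
  have hm : 0 < Fintype.card F / 2 := by have := Fintype.one_lt_card (α := F); omega
  have hpow_half {y : F} (hy0 : y ≠ 0) (hy : IsSquare y) : y ^ (Fintype.card F / 2) = 1 :=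
    (isSquare_iff hF hy0).mp hy
  have hinv0 {x : F} (hx0 : x ≠ 0) : g⁻¹ * x ≠ 0 := mul_ne_zero (inv_ne_zero hg0) hx0
  constructor
  · rintro ⟨a₁, a₂, r₁, r₂, ha₁, ha₂, -, -, -, -, h0, hns, hsq⟩
    refine ⟨a₁ * g ^ r₁, a₂, r₁ % (Fintype.card F / 2), r₂ % (Fintype.card F / 2),
      mul_ne_zero ha₁ (pow_ne_zero _ hg0), ha₂, Nat.mod_lt _ hm, Nat.mod_lt _ hm, ?_⟩
    funext x
    by_cases hx0 : x = 0
    · rw [hx0, normalForm_zero, h0]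
    by_cases hx : IsSquare x
    · rw [normalForm_of_isSquare hx0 hx, ← pow_eq_pow_mod r₂ (hpow_half hx0 hx),
        hsq x hx0 ((exists_ne_zero_eq_sq_iff hx0).mpr hx)]
    · rw [normalForm_of_not_isSquare hx,
        ← pow_eq_pow_mod r₁ (hpow_half (hinv0 hx0) (isSquare_inv_mul hg hx)),
        hns x hx0 (by rwa [exists_ne_zero_eq_sq_iff hx0]), mul_pow, inv_pow, mul_assoc,
        mul_inv_cancel_left₀ (pow_ne_zero _ hg0)]
  · rintro ⟨b₁, b₂, s₁, s₂, hb₁, hb₂, hs₁, hs₂, rfl⟩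
    refine ⟨b₁ * g⁻¹ ^ (s₁ + Fintype.card F / 2), b₂, s₁ + Fintype.card F / 2,
      s₂ + Fintype.card F / 2, mul_ne_zero hb₁ (pow_ne_zero _ (inv_ne_zero hg0)), hb₂,
      by omega, by omega, by omega, by omega, normalForm_zero, ?_, ?_⟩
    · intro x hx0 hx
      rw [exists_ne_zero_eq_sq_iff hx0] at hx
      rw [normalForm_of_not_isSquare hx, mul_assoc, ← mul_pow, pow_add,
        hpow_half (hinv0 hx0) (isSquare_inv_mul hg hx), mul_one]
    · intro x hx0 hx
      rw [exists_ne_zero_eq_sq_iff hx0] at hx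
      rw [normalForm_of_isSquare hx0 hx, pow_add, hpow_half hx0 hx, mul_one]

open Classical in
theorem two_mul_card_filter_isSquare_iff_not (hF : ringChar F ≠ 2) :
    2 * #(((univ.erase 0) ×ˢ (univ.erase 0)).filter
      fun b : F × F => IsSquare b.1 ↔ ¬ IsSquare b.2) = (Fintype.card F - 1) ^ 2 := by
  obtain ⟨g, hg⟩ := exists_nonsquare hF
  have hg0 := ne_zero_of_not_isSquare hg
  have hmul {x : F} (hx0 : x ≠ 0) : IsSquare (g * x) ↔ ¬ IsSquare x := by
    rw [isSquare_mul_iff hg0 hx0]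
    tauto
  set S := (univ.erase (0 : F)) ×ˢ (univ.erase (0 : F))
  have hS : #S = (Fintype.card F - 1) ^ 2 := by
    simp [S, card_erase_of_mem, sq]
  -- multiplying the first coordinate by a non-square swaps the two halves
  have hswap : #(S.filter fun b => IsSquare b.1 ↔ ¬ IsSquare b.2) =
      #(S.filter fun b => ¬ (IsSquare b.1 ↔ ¬ IsSquare b.2)) := by
    refine card_nbij' (fun b => (g * b.1, b.2)) (fun b => (g⁻¹ * b.1, b.2)) ?_ ?_ ?_ ?_
    · rintro ⟨x, y⟩ hb
      simp only [S, mem_coe, mem_filter, mem_product, mem_erase, mem_univ, and_true] at hb ⊢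
      refine ⟨⟨mul_ne_zero hg0 hb.1.1, hb.1.2⟩, ?_⟩
      rw [hmul hb.1.1]
      tauto
    · rintro ⟨x, y⟩ hb
      simp only [S, mem_coe, mem_filter, mem_product, mem_erase, mem_univ, and_true] at hb ⊢
      have hx0 : g⁻¹ * x ≠ 0 := mul_ne_zero (inv_ne_zero hg0) hb.1.1
      have hx := hmul hx0
      rw [mul_inv_cancel_left₀ hg0] at hx
      exact ⟨⟨hx0, hb.1.2⟩, by tauto⟩
    · intro b _
      simp [inv_mul_cancel_left₀ hg0]
    · intro b _
      simp [mul_inv_cancel_left₀ hg0]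
  have := card_filter_add_card_filter_not (s := S) fun b => IsSquare b.1 ↔ ¬ IsSquare b.2
  omega

variable (F) in
open Classical in
noncomputable def admissibleParams : Finset ((F × F) × ℕ × ℕ) :=
  (((univ.erase 0) ×ˢ (univ.erase 0)).filter fun b : F × F => IsSquare b.1 ↔ ¬ IsSquare b.2) ×ˢ
    (((range (Fintype.card F / 2)).filter (Fintype.card F / 2).Coprime) ×ˢ
      ((range (Fintype.card F / 2)).filter (Fintype.card F / 2).Coprime))

theorem mk_mem_admissibleParams {b₁ b₂ : F} {s₁ s₂ : ℕ} :
    ((b₁, b₂), s₁, s₂) ∈ admissibleParams F ↔ b₁ ≠ 0 ∧ b₂ ≠ 0 ∧ (IsSquare b₁ ↔ ¬ IsSquare b₂) ∧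
      (s₁ < Fintype.card F / 2 ∧ (Fintype.card F / 2).Coprime s₁) ∧
      (s₂ < Fintype.card F / 2 ∧ (Fintype.card F / 2).Coprime s₂) := by
  simp [admissibleParams, and_assoc]

theorem two_mul_card_admissibleParams (hF : ringChar F ≠ 2) :
    2 * #(admissibleParams F) =
      (Fintype.card F - 1) ^ 2 * (Fintype.card F / 2).totient ^ 2 := by
  rw [admissibleParams, card_product, card_product, ← mul_assoc,
    two_mul_card_filter_isSquare_iff_not hF, Nat.totient_eq_card_coprime, sq (#_)]

theorem exists_mem_admissibleParams_iff (hF : ringChar F ≠ 2) (hg : ¬ IsSquare g) (f : F → F) :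
    (∃ p ∈ admissibleParams F, normalForm g p.1.1 p.1.2 p.2.1 p.2.2 = f) ↔
      Function.Bijective f ∧ ∃ (b₁ b₂ : F) (s₁ s₂ : ℕ), b₁ ≠ 0 ∧ b₂ ≠ 0 ∧
        s₁ < Fintype.card F / 2 ∧ s₂ < Fintype.card F / 2 ∧ normalForm g b₁ b₂ s₁ s₂ = f := by
  constructor
  · rintro ⟨⟨⟨b₁, b₂⟩, s₁, s₂⟩, hp, rfl⟩
    obtain ⟨hb₁, hb₂, hb, ⟨hs₁, hc₁⟩, ⟨hs₂, hc₂⟩⟩ := mk_mem_admissibleParams.mp hp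
    exact ⟨(normalForm_bijective_iff hF hg hb₁ hb₂).mpr ⟨hc₁, hc₂, hb⟩,
      b₁, b₂, s₁, s₂, hb₁, hb₂, hs₁, hs₂, rfl⟩
  · rintro ⟨hbij, b₁, b₂, s₁, s₂, hb₁, hb₂, hs₁, hs₂, rfl⟩
    obtain ⟨hc₁, hc₂, hb⟩ := (normalForm_bijective_iff hF hg hb₁ hb₂).mp hbij
    exact ⟨((b₁, b₂), s₁, s₂), mk_mem_admissibleParams.mpr ⟨hb₁, hb₂, hb, ⟨hs₁, hc₁⟩, ⟨hs₂, hc₂⟩⟩,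
      rfl⟩

theorem normalForm_injOn_admissibleParams (hF : ringChar F ≠ 2) {γ : Fˣ}
    (hγ : ∀ x : Fˣ, x ∈ Subgroup.zpowers γ) :
    Set.InjOn (fun p : (F × F) × ℕ × ℕ => normalForm (γ : F) p.1.1 p.1.2 p.2.1 p.2.2)
      (admissibleParams F) := by
  rintro ⟨⟨b₁, b₂⟩, s₁, s₂⟩ hp ⟨⟨b₁', b₂'⟩, s₁', s₂'⟩ hp' h
  obtain ⟨hb₁, hb₂, -, ⟨hs₁, -⟩, ⟨hs₂, -⟩⟩ := mk_mem_admissibleParams.mp hp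
  obtain ⟨-, -, -, ⟨hs₁', -⟩, ⟨hs₂', -⟩⟩ := mk_mem_admissibleParams.mp hp'
  have hγ' := not_isSquare_of_forall_mem_zpowers hF hγ
  have key {y : F} (hy0 : y ≠ 0) (hy : IsSquare y) :
      b₁ * y ^ s₁ = b₁' * y ^ s₁' ∧ b₂ * y ^ s₂ = b₂' * y ^ s₂' := by
    have h₁ := congrFun h (γ * y)
    have h₂ := congrFun h y
    simp only [normalForm_mul hγ' hy0 hy] at h₁
    simp only [normalForm_of_isSquare hy0 hy] at h₂
    exact ⟨h₁, h₂⟩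
  obtain ⟨rfl, rfl⟩ : b₁ = b₁' ∧ b₂ = b₂' := by simpa using key one_ne_zero IsSquare.one
  -- `γ ^ 2` has order `#F / 2`, so it detects the exponents
  obtain ⟨e₁, e₂⟩ := key (pow_ne_zero 2 γ.ne_zero) (IsSquare.sq _)
  rw [eq_of_sq_pow_eq_sq_pow hF hγ hs₁ hs₁' (mul_left_cancel₀ hb₁ e₁),
    eq_of_sq_pow_eq_sq_pow hF hγ hs₂ hs₂' (mul_left_cancel₀ hb₂ e₂)]

end PiecewiseMonomial

open PiecewiseMonomial in
/-- Corollary 4.5 (count): Let `q` be an odd prime power and `γ` a primitive element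
of `F_q`. The number of bijections `f : F_q → F_q` of the form `f(0) = 0`,
`f(x) = a₁x^{r₁}` on non-squares and `f(x) = a₂x^{r₂}` on nonzero squares, with
`a₁, a₂ ∈ F_q^*` and `1 ≤ r₁, r₂ ≤ q−1`, equals `(q−1)²·φ((q−1)/2)²/2`. -/
theorem stmt18 {F : Type*} [Field F] [Fintype F]
    (hodd : Odd (Fintype.card F))
    (γ : Fˣ) (hγ : ∀ x : Fˣ, x ∈ Subgroup.zpowers γ) :
    {f : F → F | Function.Bijective f ∧
        ∃ (a₁ a₂ : F) (r₁ r₂ : ℕ),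
          a₁ ≠ 0 ∧ a₂ ≠ 0 ∧
          1 ≤ r₁ ∧ r₁ ≤ Fintype.card F - 1 ∧ 1 ≤ r₂ ∧ r₂ ≤ Fintype.card F - 1 ∧
          f 0 = 0 ∧
          (∀ x : F, x ≠ 0 → ¬(∃ y : F, y ≠ 0 ∧ x = y ^ 2) → f x = a₁ * x ^ r₁) ∧
          (∀ x : F, x ≠ 0 → (∃ y : F, y ≠ 0 ∧ x = y ^ 2) → f x = a₂ * x ^ r₂)}.ncard =
      (Fintype.card F - 1) ^ 2 * Nat.totient ((Fintype.card F - 1) / 2) ^ 2 / 2 := by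
  classical
  have hF : ringChar F ≠ 2 := fun h =>
    Nat.not_even_iff_odd.mpr hodd (Nat.even_iff.mpr (even_card_of_char_two h))
  have hγ' := not_isSquare_of_forall_mem_zpowers hF hγ
  calc _ = #((admissibleParams F).image fun p => normalForm (γ : F) p.1.1 p.1.2 p.2.1 p.2.2) := by
        rw [← Set.ncard_coe_finset]
        congr 1
        ext f
        rw [Set.mem_ofPred_eq, exists_monomial_form_iff hF hγ', coe_image, Set.mem_image,
          ← exists_mem_admissibleParams_iff hF hγ']
        rfl
    _ = #(admissibleParams F) := card_image_of_injOn (normalForm_injOn_admissibleParams hF hγ)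
    _ = _ := by
        rw [show (Fintype.card F - 1) / 2 = Fintype.card F / 2 by obtain ⟨k, hk⟩ := hodd; omega,
          ← two_mul_card_admissibleParams hF, Nat.mul_div_cancel_left _ two_pos]
end
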